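/- arXiv:2204.10119 — 5 statements merged into one kernel-verified Lean document; each statement's English description precedes it below -/
import Mathlib

section
/- For t ∈ {1,2,3,4}: if a finite simple graph G admits a bipartition (A,B) with |A| ≥ |B| > 0 such that every vertex in A has degree at least t−1, then G has a K_t minor. -/
open SimpleGraph Function

/-- `G` has a `K_t` minor: there are `t` nonempty, pairwise disjoint "branch sets",
each inducing a connected subgraph, with an edge of `G` between any two of them.
(This is the "`t`-cluster" formulation, equivalent to `K_t` being obtainable from a
subgraph of `G` by contracting edges.) -/
def HasCliqueMinor {V : Type*} (G : SimpleGraph V) (t : ℕ) : Prop :=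
  ∃ f : Fin t → Set V,
    (∀ i, (f i).Nonempty) ∧
    (∀ i, (G.induce (f i)).Connected) ∧
    (Pairwise fun i j => Disjoint (f i) (f j)) ∧
    ∀ i j, i ≠ j → ∃ u ∈ f i, ∃ v ∈ f j, G.Adj u v

/-- `(A, B)` is a bipartition of `G`: the parts partition the vertex set and
every edge joins `A` to `B`. -/
def IsBipartitionWith {V : Type*} (G : SimpleGraph V) (A B : Set V) : Prop :=
  (∀ v, v ∈ A ∨ v ∈ B) ∧ (∀ v, ¬(v ∈ A ∧ v ∈ B)) ∧
    ∀ ⦃u v⦄, G.Adj u v → (u ∈ A ↔ v ∈ B)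

/-- A candidate: a graph with a bipartition `(A,B)`, `|A| ≥ |B| > 0`, every vertex
of `A` of degree at least six, and no `K_6` minor. -/
def IsCandidate {V : Type*} (G : SimpleGraph V) (A B : Set V) : Prop :=
  IsBipartitionWith G A B ∧ B.ncard ≤ A.ncard ∧ B.Nonempty ∧
    (∀ a ∈ A, 6 ≤ (G.neighborSet a).ncard) ∧ ¬ HasCliqueMinor G 6

/-- A minimal candidate: a candidate minimizing `|V(G)| + |E(G)|` among all
(finite) candidates. -/
def IsMinimalCandidate {V : Type*} [Fintype V] (G : SimpleGraph V) (A B : Set V) : Prop :=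
  IsCandidate G A B ∧
    ∀ (n : ℕ) (G' : SimpleGraph (Fin n)) (A' B' : Set (Fin n)),
      IsCandidate G' A' B' →
        Fintype.card V + G.edgeSet.ncard ≤ n + G'.edgeSet.ncard

/-!
For `t ≤ 2` a vertex or an edge is the minor. For `t = 3, 4` we argue by minimal counterexample
over minors. A vertex `b ∈ B` of degree at most one is deleted together with its neighbour, if
any; for `t = 4`, a vertex `b ∈ B` with exactly two neighbours `a₁, a₂` is contracted together
with them into one vertex of `A`. Both operations keep `|A| ≥ |B| > 0` and the degree bound on
`A`, except when `a₁` and `a₂` have the same three neighbours `b, x, y`: then an `x`–`y` path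
avoiding `a₁, a₂, b` gives a `K₄` minor, and if there is none, the graph splits at `{a₁, a₂, b}`
and counting shows that one side is again an instance. Once every vertex of `B` also has degree
at least `t - 1`, the whole graph has minimum degree `t - 1`; a longest path then closes a cycle
(`t = 3`), and Dirac's theorem gives a `K₄` minor (`t = 4`). Dirac's theorem is itself proved by
contracting edges while keeping the vertices of degree at most two pairwise adjacent.
-/

universe u

namespace SimpleGraph

variable {U V W : Type*}

lemma connected_induce_singleton (G : SimpleGraph V) (v : V) : (G.induce {v}).Connected := by
  simp

lemma connected_induce_insert_neighborSet (G : SimpleGraph V) (v : V) :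
    (G.induce (insert v (G.neighborSet v))).Connected := by
  refine induce_connected_of_patches v (Set.mem_insert v _) fun {w} hw => ?_
  rcases hw with rfl | hw
  · exact ⟨{w}, by simp, rfl, rfl, .rfl⟩
  · exact ⟨{v, w}, Set.insert_subset_insert (Set.singleton_subset_iff.2 hw), Set.mem_insert v _,
      Set.mem_insert_of_mem v rfl, (induce_pair_connected_of_adj hw).preconnected _ _⟩

lemma ncard_preimage_val (s t : Set V) : ((Subtype.val : s → V) ⁻¹' t).ncard = (t ∩ s).ncard := by
  rw [← Subtype.preimage_coe_inter_self, Set.ncard_preimage_of_injective_subset_range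
    Subtype.val_injective fun v hv => ⟨⟨v, hv.2⟩, rfl⟩]

lemma ncard_neighborSet_induce (G : SimpleGraph V) (s : Set V) (v : s) :
    ((G.induce s).neighborSet v).ncard = (G.neighborSet v ∩ s).ncard := by
  have : (G.induce s).neighborSet v = Subtype.val ⁻¹' (G.neighborSet v ∩ s) := by
    ext w; simp
  rw [this, Set.ncard_preimage_of_injective_subset_range Subtype.val_injective
    fun w hw => ⟨⟨w, hw.2⟩, rfl⟩]

lemma connected_induce_biUnion {H : SimpleGraph W} {G : SimpleGraph V} {β : W → Set V}
    (hconn : ∀ w, (G.induce (β w)).Connected)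
    (hadj : ∀ ⦃w w'⦄, H.Adj w w' → ∃ u ∈ β w, ∃ v ∈ β w', G.Adj u v)
    {S : Set W} (hS : (H.induce S).Connected) : (G.induce (⋃ w ∈ S, β w)).Connected := by
  set T := ⋃ w ∈ S, β w
  have hsub : ∀ w ∈ S, β w ⊆ T := fun w hw => Set.subset_biUnion_of_mem (u := β) hw
  have hreach : ∀ w w' : S, (H.induce S).Reachable w w' →
      ∀ u (hu : u ∈ β w) v (hv : v ∈ β w'),
        (G.induce T).Reachable ⟨u, hsub w w.2 hu⟩ ⟨v, hsub w' w'.2 hv⟩ := by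
    intro w w' hr
    induction (reachable_iff_reflTransGen _ _).1 hr
      using Relation.ReflTransGen.head_induction_on with
    | refl =>
      intro u hu v hv
      exact ((hconn w').preconnected ⟨u, hu⟩ ⟨v, hv⟩).map (induceHomOfLE G (hsub w' w'.2)).toHom
    | head hadj' hrest ih =>
      rename_i w₁ w₂
      intro u hu v hv
      obtain ⟨u', hu', v', hv', huv⟩ := hadj hadj'
      refine Reachable.trans ?_ (ih ((reachable_iff_reflTransGen _ _).2 hrest) v' hv' v hv)
      refine Reachable.trans (((hconn w₁).preconnected ⟨u, hu⟩ ⟨u', hu'⟩).map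
        (induceHomOfLE G (hsub w₁ w₁.2)).toHom) ?_
      exact Adj.reachable (G := G.induce T) huv
  obtain ⟨⟨w₀, hw₀⟩⟩ := hS.nonempty
  obtain ⟨⟨u₀, hu₀⟩⟩ := (hconn w₀).nonempty
  rw [connected_iff_exists_forall_reachable]
  refine ⟨⟨u₀, hsub w₀ hw₀ hu₀⟩, ?_⟩
  rintro ⟨v, hv⟩
  obtain ⟨w, hw, hvw⟩ := Set.mem_iUnion₂.1 hv
  exact hreach ⟨w₀, hw₀⟩ ⟨w, hw⟩ (hS.preconnected _ _) u₀ hu₀ v hvw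

def IsMinor (H : SimpleGraph W) (G : SimpleGraph V) : Prop :=
  ∃ β : W → Set V, (∀ w, (G.induce (β w)).Connected) ∧ Pairwise (Disjoint on β) ∧
    ∀ ⦃w w'⦄, H.Adj w w' → ∃ u ∈ β w, ∃ v ∈ β w', G.Adj u v

lemma hasCliqueMinor_iff_isMinor {G : SimpleGraph V} {t : ℕ} :
    HasCliqueMinor G t ↔ (⊤ : SimpleGraph (Fin t)).IsMinor G := by
  constructor
  · rintro ⟨f, -, hconn, hdisj, hadj⟩
    exact ⟨f, hconn, hdisj, fun i j hij => hadj i j hij⟩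
  · rintro ⟨f, hconn, hdisj, hadj⟩
    exact ⟨f, fun i => (hconn i).nonempty.elim fun v => ⟨v, v.2⟩, hconn, hdisj,
      fun i j hij => hadj hij⟩

lemma IsMinor.trans {K : SimpleGraph U} {H : SimpleGraph W} {G : SimpleGraph V}
    (hKH : K.IsMinor H) (hHG : H.IsMinor G) : K.IsMinor G := by
  obtain ⟨α, hαconn, hαdisj, hαadj⟩ := hKH
  obtain ⟨β, hβconn, hβdisj, hβadj⟩ := hHG
  refine ⟨fun k => ⋃ w ∈ α k, β w, fun k => connected_induce_biUnion hβconn hβadj (hαconn k),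
    fun k k' hkk' => ?_, fun k k' hkk' => ?_⟩
  · simp only [onFun, Set.disjoint_iUnion_left, Set.disjoint_iUnion_right]
    intro w hw w' hw'
    exact hβdisj (by rintro rfl; exact Set.disjoint_left.1 (hαdisj hkk') hw' hw)
  · obtain ⟨w, hw, w', hw', hww'⟩ := hαadj hkk'
    obtain ⟨u, hu, v, hv, huv⟩ := hβadj hww'
    exact ⟨u, Set.mem_biUnion hw hu, v, Set.mem_biUnion hw' hv, huv⟩

lemma IsMinor.hasCliqueMinor {H : SimpleGraph W} {G : SimpleGraph V} (hHG : H.IsMinor G) {t : ℕ}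
    (h : HasCliqueMinor H t) : HasCliqueMinor G t :=
  hasCliqueMinor_iff_isMinor.2 ((hasCliqueMinor_iff_isMinor.1 h).trans hHG)

lemma Hom.isMinor {H : SimpleGraph W} {G : SimpleGraph V} (f : H →g G) (hf : Injective f) :
    H.IsMinor G :=
  ⟨fun w => {f w}, fun _ => connected_induce_singleton G _,
    fun _ _ hww' => Set.disjoint_singleton.2 (hf.ne hww'),
    fun _ _ h => ⟨_, rfl, _, rfl, f.map_adj h⟩⟩

lemma isMinor_induce (G : SimpleGraph V) (s : Set V) : (G.induce s).IsMinor G :=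
  (Embedding.induce (G := G) s).toHom.isMinor (Embedding.induce (G := G) s).injective

lemma hasCliqueMinor_of_branchSets {G : SimpleGraph V} {t : ℕ} (P : Fin t → Set V)
    (hconn : ∀ i, (G.induce (P i)).Connected)
    (h : ∀ i j, i < j → Disjoint (P i) (P j) ∧ ∃ u ∈ P i, ∃ v ∈ P j, G.Adj u v) :
    HasCliqueMinor G t := by
  refine hasCliqueMinor_iff_isMinor.2 ⟨P, hconn, fun i j hij => ?_, fun i j hij => ?_⟩
  · rcases hij.lt_or_gt with hij | hij
    exacts [(h i j hij).1, (h j i hij).1.symm]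
  · rcases (top_adj i j).1 hij |>.lt_or_gt with hij | hij
    · exact (h i j hij).2
    · obtain ⟨u, hu, v, hv, huv⟩ := (h j i hij).2
      exact ⟨v, hv, u, hu, huv.symm⟩

lemma hasCliqueMinor_of_adj {G : SimpleGraph V} {t : ℕ} (f : Fin t → V)
    (hf : ∀ i j, i < j → G.Adj (f i) (f j)) : HasCliqueMinor G t := by
  have hadj : ∀ i j, i ≠ j → G.Adj (f i) (f j) := fun i j hij =>
    hij.lt_or_gt.elim (hf i j) fun h => (hf j i h).symm
  exact hasCliqueMinor_iff_isMinor.2 (Hom.isMinor ⟨f, fun hij => hadj _ _ hij⟩ fun i j hij =>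
    by_contra fun hne => (hadj i j hne).ne hij)

-- A longest path cannot be extended at its first vertex `u`, so the second neighbour of `u`
-- lies further along the path and closes a cycle.
theorem hasCliqueMinor_three_of_two_le_ncard_neighborSet [Finite V] [Nonempty V]
    {G : SimpleGraph V} (hdeg : ∀ v, 2 ≤ (G.neighborSet v).ncard) : HasCliqueMinor G 3 := by
  obtain ⟨u, v, p, hp, hmax⟩ := Walk.exists_isPath_forall_isPath_length_le_length G
  have hN : ∀ w, G.Adj u w → w ∈ p.support := fun w hw => by
    by_contra h
    have := hmax _ _ _ (hp.cons h (h := hw.symm))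
    simp at this
  cases p with
  | nil =>
    obtain ⟨w, hw, -⟩ := Set.exists_ne_of_one_lt_ncard (hdeg u) u
    have := hN w hw
    simp only [Walk.support_nil, List.mem_singleton] at this
    exact (G.loopless.irrefl u (this ▸ hw)).elim
  | @cons _ s _ hus q =>
    obtain ⟨w, huw, hws⟩ := Set.exists_ne_of_one_lt_ncard (hdeg u) s
    cases q with
    | nil =>
      simp only [Walk.support_cons, Walk.support_nil, List.mem_cons,
        List.not_mem_nil, or_false] at hN
      exact absurd ((hN w huw).resolve_left huw.ne') hws
    | @cons _ s₂ _ hss₂ r =>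
      simp only [Walk.cons_isPath_iff, Walk.support_cons, List.mem_cons, not_or] at hp
      have hwr : w ∈ r.support := by
        simpa [huw.ne', hws] using hN w huw
      refine hasCliqueMinor_of_branchSets ![{u}, {s}, {x | x ∈ r.support}] (fun i => ?_)
        fun i j hij => ?_
      · fin_cases i
        exacts [connected_induce_singleton G u, connected_induce_singleton G s,
          r.connected_induce_support]
      · fin_cases i <;> fin_cases j <;> simp at hij ⊢
        exacts [⟨hp.2.1, hus⟩, ⟨hp.2.2, w, hwr, huw⟩, ⟨hp.1.2, s₂, r.start_mem_support, hss₂⟩]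

lemma hasCliqueMinor_four_of_reachable {G : SimpleGraph V} {P Q T : Set V}
    (hP : (G.induce P).Connected) (hQ : (G.induce Q).Connected) (hPQ : Disjoint P Q)
    (hadj : ∃ u ∈ P, ∃ v ∈ Q, G.Adj u v) {x y : V} (hxy : x ≠ y) (hTP : ∀ v ∈ T, v ∉ P)
    (hTQ : ∀ v ∈ T, v ∉ Q) (hx : x ∈ T) (hy : y ∈ T)
    (hr : (G.induce T).Reachable ⟨y, hy⟩ ⟨x, hx⟩) (hPx : ∃ u ∈ P, G.Adj u x)
    (hPy : ∃ u ∈ P, G.Adj u y) (hQx : ∃ u ∈ Q, G.Adj u x) (hQy : ∃ u ∈ Q, G.Adj u y) :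
    HasCliqueMinor G 4 := by
  classical
  obtain ⟨p⟩ := hr
  obtain ⟨q, hq, hqT⟩ : ∃ q : G.Walk y x, q.IsPath ∧ ∀ w ∈ q.support, w ∈ T := by
    refine ⟨(p.map (Embedding.induce _).toHom).bypass, Walk.bypass_isPath _, fun w hw => ?_⟩
    obtain ⟨w', -, rfl⟩ :=
      List.mem_map.1 (Walk.support_map _ _ ▸ Walk.support_bypass_subset_support _ hw)
    exact w'.2
  cases q with
  | nil => exact absurd rfl hxy
  | @cons _ u _ hyu r =>
    rw [Walk.cons_isPath_iff] at hq
    have hrT : ∀ w ∈ r.support, w ∈ T := fun w hw => hqT w (by simp [hw])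
    refine hasCliqueMinor_of_branchSets ![P, Q, {w | w ∈ r.support}, {y}] (fun i => ?_)
      fun i j hij => ?_
    · fin_cases i
      exacts [hP, hQ, r.connected_induce_support, connected_induce_singleton G y]
    · fin_cases i <;> fin_cases j <;> simp at hij ⊢
      · exact ⟨hPQ, hadj⟩
      · obtain ⟨v, hv, hvx⟩ := hPx
        exact ⟨Set.disjoint_right.2 fun w hw => hTP w (hrT w hw), v, hv, x, r.end_mem_support, hvx⟩
      · exact ⟨hTP y hy, hPy⟩
      · obtain ⟨v, hv, hvx⟩ := hQx
        exact ⟨Set.disjoint_right.2 fun w hw => hTQ w (hrT w hw), v, hv, x, r.end_mem_support, hvx⟩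
      · exact ⟨hTQ y hy, hQy⟩
      · exact ⟨hq.2, u, r.start_mem_support, hyu.symm⟩

-- The vertices of `S` other than `x` are deleted and `x` inherits their edges.
def contractTo (G : SimpleGraph V) (S : Set V) (x : V) : SimpleGraph ↥(S \ {x})ᶜ :=
  fromRel fun u v => G.Adj u v ∨ (u.1 = x ∧ ∃ s ∈ S, G.Adj s v)

section contractTo

variable {G : SimpleGraph V} {S : Set V} {x : V}

lemma mem_or_eq_of_mem_compl_diff {v : V} (hv : v ∈ (S \ {x})ᶜ) : v ∉ S ∨ v = x := by
  by_contra! h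
  exact hv ⟨h.1, h.2⟩

lemma contractTo_adj_of_notMem (hx : x ∈ S) {u v : ↥(S \ {x})ᶜ} (hu : u.1 ∉ S) (hv : v.1 ∉ S) :
    (G.contractTo S x).Adj u v ↔ G.Adj u v := by
  have hux : u.1 ≠ x := (ne_of_mem_of_not_mem hx hu).symm
  have hvx : v.1 ≠ x := (ne_of_mem_of_not_mem hx hv).symm
  simp only [contractTo, fromRel_adj, hux, hvx, false_and, or_false, ne_eq]
  exact ⟨fun h => h.2.elim id fun h => h.symm,
    fun h => ⟨fun huv => h.ne (congrArg _ huv), Or.inl h⟩⟩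

lemma contractTo_adj_center (hx : x ∈ S) {v : ↥(S \ {x})ᶜ} (hv : v.1 ∉ S) :
    (G.contractTo S x).Adj ⟨x, fun h => h.2 rfl⟩ v ↔ ∃ s ∈ S, G.Adj s v := by
  have hvx : v.1 ≠ x := (ne_of_mem_of_not_mem hx hv).symm
  simp only [contractTo, fromRel_adj, hvx, false_and, or_false, true_and, ne_eq]
  constructor
  · rintro ⟨-, (h | h) | h⟩
    exacts [⟨x, hx, h⟩, h, ⟨x, hx, h.symm⟩]
  · intro h
    exact ⟨fun h' => hvx (congrArg Subtype.val h').symm, Or.inl (Or.inr h)⟩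

lemma isMinor_contractTo (hS : (G.induce S).Connected) (hx : x ∈ S) :
    (G.contractTo S x).IsMinor G := by
  classical
  have hβ : ∀ u : ↥(S \ {x})ᶜ, u.1 ∈ if u.1 = x then S else {u.1} := fun u => by
    split_ifs with h
    exacts [by rwa [h], rfl]
  refine ⟨fun u => if u.1 = x then S else {u.1}, fun u => ?_, fun u v huv => ?_,
    fun u v huv => ?_⟩
  · show (G.induce (if u.1 = x then S else {u.1})).Connected
    by_cases h : u.1 = x
    · rw [if_pos h]; exact hS
    · rw [if_neg h]; exact connected_induce_singleton G u.1
  · have hdisj : ∀ u v : ↥(S \ {x})ᶜ, u.1 = x → v.1 ≠ x → Disjoint S {v.1} := fun u v _ hv =>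
      Set.disjoint_singleton_right.2 ((mem_or_eq_of_mem_compl_diff v.2).resolve_right hv)
    dsimp only [onFun]
    split_ifs with hu hv hv
    · exact absurd (Subtype.ext (hu.trans hv.symm)) huv
    · exact hdisj u v hu hv
    · exact (hdisj v u hv hu).symm
    · exact Set.disjoint_singleton.2 fun h => huv (Subtype.ext h)
  · have hS' : ∀ w : ↥(S \ {x})ᶜ, w.1 = x → ∀ s ∈ S, s ∈ if w.1 = x then S else {w.1} :=
      fun w hw s hs => by rwa [if_pos hw]
    obtain ⟨-, (h | ⟨hu, s, hs, h⟩) | (h | ⟨hv, s, hs, h⟩)⟩ := (fromRel_adj _ _ _).1 huv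
    · exact ⟨u, hβ u, v, hβ v, h⟩
    · exact ⟨s, hS' u hu s hs, v, hβ v, h⟩
    · exact ⟨u, hβ u, v, hβ v, h.symm⟩
    · exact ⟨u, hβ u, s, hS' v hv s hs, h.symm⟩

lemma neighborSet_contractTo (hx : x ∈ S) (v : ↥(S \ {x})ᶜ) (hv : v.1 ∉ S) :
    (G.contractTo S x).neighborSet v =
      Subtype.val ⁻¹' (G.neighborSet v \ S ∪ {w | w = x ∧ ∃ s ∈ S, G.Adj v s}) := by
  ext ⟨w, hw'⟩
  simp only [mem_neighborSet, Set.mem_preimage, Set.mem_union, Set.mem_sdiff, Set.mem_ofPred_eq]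
  rcases mem_or_eq_of_mem_compl_diff hw' with hw | rfl
  · rw [contractTo_adj_of_notMem hx hv hw]
    simp [hw, (ne_of_mem_of_not_mem hx hw).symm]
  · rw [adj_comm, contractTo_adj_center hx hv]
    simp [hx, adj_comm]

lemma neighborSet_contractTo_center (hx : x ∈ S) :
    (G.contractTo S x).neighborSet ⟨x, fun h => h.2 rfl⟩ =
      Subtype.val ⁻¹' ({v | ∃ s ∈ S, G.Adj s v} \ S) := by
  ext ⟨w, hw'⟩
  simp only [mem_neighborSet, Set.mem_preimage, Set.mem_sdiff, Set.mem_ofPred_eq]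
  rcases mem_or_eq_of_mem_compl_diff hw' with hw | rfl
  · rw [contractTo_adj_center hx hw]
    simp [hw]
  · simp [hx]

lemma subset_range_val_compl_diff {T : Set V} (hT : ∀ w ∈ T, w ∉ S ∨ w = x) :
    T ⊆ Set.range (Subtype.val : ↥(S \ {x})ᶜ → V) :=
  fun w hw => ⟨⟨w, fun h => (hT w hw).elim (· h.1) (h.2 ·)⟩, rfl⟩

open Classical in
lemma ncard_neighborSet_contractTo [Finite V] (hx : x ∈ S) (v : ↥(S \ {x})ᶜ) (hv : v.1 ∉ S) :
    ((G.contractTo S x).neighborSet v).ncard =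
      (G.neighborSet v \ S).ncard + if ∃ s ∈ S, G.Adj v s then 1 else 0 := by
  rw [neighborSet_contractTo hx v hv, Set.ncard_preimage_of_injective_subset_range
    Subtype.val_injective, Set.ncard_union_eq]
  · split_ifs with h
    · simp [h]
    · simp [h]
  · exact Set.disjoint_left.2 fun w hw hw' => hw.2 (hw'.1 ▸ hx)
  · exact subset_range_val_compl_diff fun w hw => hw.elim (.inl ·.2) (.inr ·.1)

lemma ncard_neighborSet_contractTo_center (hx : x ∈ S) :
    ((G.contractTo S x).neighborSet ⟨x, fun h => h.2 rfl⟩).ncard =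
      ({v | ∃ s ∈ S, G.Adj s v} \ S).ncard := by
  rw [neighborSet_contractTo_center hx, Set.ncard_preimage_of_injective_subset_range
    Subtype.val_injective (subset_range_val_compl_diff fun w hw => .inl hw.2)]

end contractTo

def HasSmallerMinor {V : Type u} (P : ∀ {W : Type u}, SimpleGraph W → Prop) (G : SimpleGraph V) :
    Prop :=
  ∃ (W : Type u) (_ : Finite W) (H : SimpleGraph W), Nat.card W < Nat.card V ∧ H.IsMinor G ∧ P H

theorem hasCliqueMinor_of_forall_hasSmallerMinor {t : ℕ} (P : ∀ {W : Type u}, SimpleGraph W → Prop)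
    (step : ∀ {W : Type u} [Finite W] (H : SimpleGraph W), P H →
      HasCliqueMinor H t ∨ HasSmallerMinor P H)
    {V : Type u} [Finite V] (G : SimpleGraph V) (hG : P G) : HasCliqueMinor G t := by
  induction hn : Nat.card V using Nat.strong_induction_on generalizing V with
  | _ n ih =>
    obtain h | ⟨W, _, H, hlt, hHG, hH⟩ := step G hG
    · exact h
    · exact hHG.hasCliqueMinor (ih _ (hn ▸ hlt) H hH rfl)

section HasSmallerMinor

variable {V : Type u} [Finite V] {G : SimpleGraph V} {P : ∀ {W : Type u}, SimpleGraph W → Prop}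

lemma hasSmallerMinor_induce {s : Set V} (hs : s ≠ Set.univ) (hP : P (G.induce s)) :
    HasSmallerMinor P G :=
  ⟨s, inferInstance, G.induce s, Set.ncard_lt_card hs, isMinor_induce G s, hP⟩

lemma hasSmallerMinor_contractTo {S : Set V} {x y : V} (hS : (G.induce S).Connected) (hx : x ∈ S)
    (hy : y ∈ S) (hyx : y ≠ x) (hP : P (G.contractTo S x)) : HasSmallerMinor P G :=
  ⟨_, inferInstance, G.contractTo S x,
    Set.ncard_lt_card ((Set.ne_univ_iff_exists_notMem _).2 ⟨y, fun h => h ⟨hy, hyx⟩⟩),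
    isMinor_contractTo hS hx, hP⟩

end HasSmallerMinor

section Dirac

variable {V : Type u} [Finite V] {G : SimpleGraph V}

/-- The vertices other than `x, y` whose degree may drop to at most two when `xy` is
contracted. -/
def atRisk (G : SimpleGraph V) (x y : V) : Set V :=
  {v | v ≠ x ∧ v ≠ y ∧ ((G.neighborSet v).ncard ≤ 2 ∨
    G.Adj x v ∧ G.Adj y v ∧ (G.neighborSet v).ncard ≤ 3)}

lemma mem_atRisk_of_ncard_neighborSet_contractTo_le {x y : V} (hxy : x ≠ y)
    (v : ↥(({x, y} : Set V) \ {x})ᶜ) (hvx : v.1 ≠ x)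
    (hv : ((G.contractTo {x, y} x).neighborSet v).ncard ≤ 2) : v.1 ∈ G.atRisk x y := by
  have hvy : v.1 ≠ y := fun h => v.2 ⟨Or.inr h, fun h' => hvx h'⟩
  classical
  rw [ncard_neighborSet_contractTo (Set.mem_insert x {y}) v (by simp [hvx, hvy])] at hv
  have hsplit := Set.ncard_inter_add_ncard_sdiff_eq_ncard (G.neighborSet v) {x, y}
  refine ⟨hvx, hvy, ?_⟩
  by_cases hboth : G.Adj v x ∧ G.Adj v y
  · have : (G.neighborSet v ∩ {x, y}).ncard ≤ 2 :=
      (Set.ncard_le_ncard Set.inter_subset_right).trans (Set.ncard_pair hxy).le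
    rw [if_pos ⟨x, Set.mem_insert x {y}, hboth.1⟩] at hv
    exact .inr ⟨hboth.1.symm, hboth.2.symm, by omega⟩
  · have : (G.neighborSet v ∩ {x, y}).ncard ≤
        if ∃ s ∈ ({x, y} : Set V), G.Adj v s then 1 else 0 := by
      split_ifs with hex
      · refine (Set.ncard_le_one (Set.toFinite _)).2 ?_
        rintro w ⟨hw, rfl | rfl⟩ w' ⟨hw', rfl | rfl⟩
        exacts [rfl, absurd ⟨hw, hw'⟩ hboth, absurd ⟨hw', hw⟩ hboth, rfl]
      · refine (Set.ncard_eq_zero (Set.toFinite _)).2 (Set.eq_empty_of_forall_notMem ?_) |>.le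
        exact fun w ⟨hw, hwS⟩ => hex ⟨w, hwS, hw⟩
    exact .inl (by omega)

lemma isClique_contractTo_pair {x y : V} (hxy : G.Adj x y) (hsub : (G.atRisk x y).Subsingleton)
    (hadj : G.atRisk x y ⊆ G.neighborSet x) :
    (G.contractTo {x, y} x).IsClique {v | ((G.contractTo {x, y} x).neighborSet v).ncard ≤ 2} := by
  have hx : x ∈ ({x, y} : Set V) := Set.mem_insert x {y}
  have hcenter : ∀ v : ↥(({x, y} : Set V) \ {x})ᶜ, v.1 ≠ x → v.1 ∈ G.atRisk x y →
      (G.contractTo {x, y} x).Adj ⟨x, fun h => h.2 rfl⟩ v := fun v hvx hv =>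
    (contractTo_adj_center hx (by simp [hvx, hv.2.1])).2 ⟨x, hx, hadj hv⟩
  intro u hu v hv huv
  by_cases hux : u.1 = x
  · obtain rfl : u = ⟨x, fun h => h.2 rfl⟩ := Subtype.ext hux
    have hvx : v.1 ≠ x := fun h => huv (Subtype.ext h.symm)
    exact hcenter v hvx (mem_atRisk_of_ncard_neighborSet_contractTo_le hxy.ne v hvx hv)
  by_cases hvx : v.1 = x
  · obtain rfl : v = ⟨x, fun h => h.2 rfl⟩ := Subtype.ext hvx
    exact (hcenter u hux (mem_atRisk_of_ncard_neighborSet_contractTo_le hxy.ne u hux hu)).symm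
  exact absurd (Subtype.ext (hsub (mem_atRisk_of_ncard_neighborSet_contractTo_le hxy.ne u hux hu)
    (mem_atRisk_of_ncard_neighborSet_contractTo_le hxy.ne v hvx hv))) huv

-- Dirac's theorem (minimum degree three forces a `K₄` minor) is proved by induction on this
-- weaker hypothesis, which survives the contractions below.
def DiracInvariant (G : SimpleGraph V) : Prop :=
  4 ≤ Nat.card V ∧ G.IsClique {v | (G.neighborSet v).ncard ≤ 2}

lemma hasCliqueMinor_four_of_card_eq_four (hcard : Nat.card V = 4)
    (hlow : G.IsClique {v | (G.neighborSet v).ncard ≤ 2}) : HasCliqueMinor G 4 := by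
  have hlow' : ∀ u v, u ≠ v → ¬G.Adj u v → (G.neighborSet u).ncard ≤ 2 := fun u v huv h => by
    have : G.neighborSet u ⊆ {u, v}ᶜ := by
      rintro w hw (rfl | rfl)
      exacts [G.loopless.irrefl _ hw, h hw]
    refine (Set.ncard_le_ncard this).trans ?_
    rw [Set.ncard_compl, Set.ncard_pair huv, hcard]
  have hadj : ∀ u v, u ≠ v → G.Adj u v := fun u v huv => by
    by_contra h
    exact h (hlow (hlow' u v huv h) (hlow' v u huv.symm fun h' => h h'.symm) huv)
  let f := (Finite.equivFinOfCardEq hcard).symm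
  exact hasCliqueMinor_of_adj f fun i j hij => hadj _ _ (f.injective.ne hij.ne)

lemma hasSmallerMinor_diracInvariant_of_adj (h5 : 5 ≤ Nat.card V) {x y : V} (hxy : G.Adj x y)
    {R : Set V} (hrisk : G.atRisk x y ⊆ R) (hR : R ⊆ G.neighborSet x) (hR1 : R.ncard ≤ 1) :
    HasSmallerMinor DiracInvariant G := by
  refine hasSmallerMinor_contractTo (induce_pair_connected_of_adj hxy) (Set.mem_insert x {y})
    (Set.mem_insert_of_mem x rfl) hxy.ne.symm ⟨?_, isClique_contractTo_pair hxy
      (fun v hv w hw => (Set.ncard_le_one (Set.toFinite _)).1 hR1 v (hrisk hv) w (hrisk hw))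
      (hrisk.trans hR)⟩
  rw [Nat.card_coe_set_eq, Set.ncard_compl,
    Set.insert_sdiff_self_of_notMem (Set.notMem_singleton_iff.2 hxy.ne), Set.ncard_singleton]
  omega

lemma DiracInvariant.hasSmallerMinor_of_ncard_le_two (hG : G.DiracInvariant)
    (h5 : 5 ≤ Nat.card V) {d : V} (hd : (G.neighborSet d).ncard ≤ 2) :
    HasSmallerMinor DiracInvariant G := by
  obtain ⟨y, hy⟩ | hN := (G.neighborSet d).eq_empty_or_nonempty.symm
  · refine hasSmallerMinor_diracInvariant_of_adj h5 hy (R := G.neighborSet d \ {y}) ?_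
      Set.sdiff_subset (by rw [Set.ncard_sdiff_singleton_of_mem hy]; omega)
    rintro v ⟨hvd, hvy, hv | hv⟩
    exacts [⟨hG.2 hd hv hvd.symm, hvy⟩, ⟨hv.1, hvy⟩]
  · have hdeg : ∀ u : ↥({d}ᶜ : Set V),
        ((G.induce {d}ᶜ).neighborSet u).ncard = (G.neighborSet u).ncard := fun u => by
      rw [ncard_neighborSet_induce, Set.inter_eq_left.2]
      rintro w hw rfl
      exact Set.eq_empty_iff_forall_notMem.1 hN u hw.symm
    refine hasSmallerMinor_induce (s := {d}ᶜ)
      ((Set.ne_univ_iff_exists_notMem _).2 ⟨d, fun h => h rfl⟩) ⟨?_, fun u hu v hv huv => ?_⟩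
    · rw [Nat.card_coe_set_eq, Set.ncard_compl, Set.ncard_singleton]; omega
    · exact hG.2 (by simpa [hdeg] using hu) (by simpa [hdeg] using hv)
        fun h => huv (Subtype.ext h)

lemma hasCliqueMinor_or_hasSmallerMinor_of_ncard_eq_three (h5 : 5 ≤ Nat.card V)
    (hdeg : ∀ v, 3 ≤ (G.neighborSet v).ncard) {w : V} (hw : (G.neighborSet w).ncard = 3) :
    HasCliqueMinor G 4 ∨ HasSmallerMinor DiracInvariant G := by
  by_cases hcl : G.IsClique (G.neighborSet w)
  · obtain ⟨a, b, c, hab, hac, hbc, hN⟩ := Set.ncard_eq_three.1 hw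
    have ha : G.Adj w a := by simp [← mem_neighborSet, hN]
    have hb : G.Adj w b := by simp [← mem_neighborSet, hN]
    have hc : G.Adj w c := by simp [← mem_neighborSet, hN]
    have hab' := hcl ha hb hab
    have hac' := hcl ha hc hac
    have hbc' := hcl hb hc hbc
    refine .inl (hasCliqueMinor_of_adj ![w, a, b, c] fun i j hij => ?_)
    fin_cases i <;> fin_cases j <;> simp_all
  · obtain ⟨p, hp, q, hq, hpq, hnadj⟩ : ∃ p ∈ G.neighborSet w, ∃ q ∈ G.neighborSet w,
        p ≠ q ∧ ¬G.Adj p q := by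
      simpa [IsClique, Set.Pairwise] using hcl
    refine .inr (hasSmallerMinor_diracInvariant_of_adj h5 hp (R := G.neighborSet w \ {p, q}) ?_
      Set.sdiff_subset ?_)
    · rintro v ⟨-, hvp, hv | hv⟩
      · exact absurd hv (by have := hdeg v; omega)
      · refine ⟨hv.1, ?_⟩
        rintro (rfl | rfl)
        exacts [hvp rfl, hnadj hv.2.1]
    · rw [Set.ncard_sdiff (Set.insert_subset hp (Set.singleton_subset_iff.2 hq)),
        Set.ncard_pair hpq]
      omega

lemma hasSmallerMinor_diracInvariant_of_four_le (h5 : 5 ≤ Nat.card V)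
    (hdeg : ∀ v, 4 ≤ (G.neighborSet v).ncard) : HasSmallerMinor DiracInvariant G := by
  obtain ⟨w⟩ : Nonempty V := (Nat.card_pos_iff.1 (by omega)).1
  obtain ⟨p, hp⟩ := Set.nonempty_of_ncard_ne_zero (s := G.neighborSet w) (by grind)
  refine hasSmallerMinor_diracInvariant_of_adj h5 hp (R := ∅) (fun v ⟨_, _, hv⟩ => ?_)
    (Set.empty_subset _) (by simp)
  have := hdeg v
  omega

lemma DiracInvariant.hasCliqueMinor_or_hasSmallerMinor (hG : G.DiracInvariant) :
    HasCliqueMinor G 4 ∨ HasSmallerMinor DiracInvariant G := by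
  rcases hG.1.eq_or_lt with h4 | h5
  · exact .inl (hasCliqueMinor_four_of_card_eq_four h4.symm hG.2)
  by_cases hd : ∃ d, (G.neighborSet d).ncard ≤ 2
  · obtain ⟨d, hd⟩ := hd
    exact .inr (hG.hasSmallerMinor_of_ncard_le_two h5 hd)
  push Not at hd
  by_cases hw : ∃ w, (G.neighborSet w).ncard = 3
  · obtain ⟨w, hw⟩ := hw
    exact hasCliqueMinor_or_hasSmallerMinor_of_ncard_eq_three h5 hd hw
  push Not at hw
  exact .inr (hasSmallerMinor_diracInvariant_of_four_le h5 fun v => by grind)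

theorem hasCliqueMinor_four_of_three_le_ncard_neighborSet (h4 : 4 ≤ Nat.card V)
    (hdeg : ∀ v, 3 ≤ (G.neighborSet v).ncard) : HasCliqueMinor G 4 :=
  hasCliqueMinor_of_forall_hasSmallerMinor (fun H => H.DiracInvariant)
    (fun _ hH => hH.hasCliqueMinor_or_hasSmallerMinor) G
    ⟨h4, fun v hv => absurd (show (G.neighborSet v).ncard ≤ 2 from hv) (by grind)⟩

end Dirac

end SimpleGraph

section Bipartite

variable {V : Type u} {G : SimpleGraph V} {A B : Set V}

namespace IsBipartitionWith

lemma notMem_right (h : IsBipartitionWith G A B) {a : V} (ha : a ∈ A) : a ∉ B :=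
  fun hb => h.2.1 a ⟨ha, hb⟩

lemma neighborSet_subset_right (h : IsBipartitionWith G A B) {a : V} (ha : a ∈ A) :
    G.neighborSet a ⊆ B := fun _ hv => (h.2.2 hv).1 ha

lemma neighborSet_subset_left (h : IsBipartitionWith G A B) {b : V} (hb : b ∈ B) :
    G.neighborSet b ⊆ A := fun _ hv => (h.2.2 (G.adj_symm hv)).2 hb

lemma notMem_insert_neighborSet (h : IsBipartitionWith G A B) {b v : V} (hb : b ∈ B)
    (hv : v ∈ B) (hvb : v ≠ b) : v ∉ insert b (G.neighborSet b) :=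
  fun hv' => hv'.elim hvb fun hv' => h.notMem_right (h.neighborSet_subset_left hb hv') hv

lemma neighborSet_subset_compl_insert_neighborSet (h : IsBipartitionWith G A B) {a b : V}
    (hb : b ∈ B) (ha : a ∈ A) (hab : a ∉ insert b (G.neighborSet b)) :
    G.neighborSet a ⊆ (insert b (G.neighborSet b))ᶜ := fun w hw =>
  h.notMem_insert_neighborSet hb (h.neighborSet_subset_right ha hw)
    (by rintro rfl; exact hab (.inr (G.adj_symm hw)))

lemma induce (h : IsBipartitionWith G A B) (s : Set V) :
    IsBipartitionWith (G.induce s) (Subtype.val ⁻¹' A) (Subtype.val ⁻¹' B) :=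
  ⟨fun v => h.1 v, fun v => h.2.1 v, fun _ _ huv => h.2.2 huv⟩

lemma contractTo (h : IsBipartitionWith G A B) {S : Set V} {x : V} (hxA : x ∈ A)
    (hS : ∀ s ∈ S, ∀ v ∉ S, G.Adj s v → v ∈ B) :
    IsBipartitionWith (G.contractTo S x) (Subtype.val ⁻¹' A) (Subtype.val ⁻¹' B) := by
  refine ⟨fun v => h.1 v, fun v => h.2.1 v, fun u v huv => ?_⟩
  have hnotS : ∀ w : ↥(S \ {x})ᶜ, w ≠ ⟨x, fun h => h.2 rfl⟩ → w.1 ∉ S := fun w hw =>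
    (mem_or_eq_of_mem_compl_diff w.2).resolve_right fun h' => hw (Subtype.ext h')
  obtain ⟨hne, (huv | ⟨hux, s, hs, hsv⟩) | (hvu | ⟨hvx, s, hs, hsu⟩)⟩ := (fromRel_adj _ _ _).1 huv
  · exact h.2.2 huv
  · obtain rfl : u = ⟨x, fun h => h.2 rfl⟩ := Subtype.ext hux
    exact iff_of_true hxA (hS s hs v (hnotS v hne.symm) hsv)
  · exact h.2.2 hvu.symm
  · obtain rfl : v = ⟨x, fun h => h.2 rfl⟩ := Subtype.ext hvx
    exact iff_of_false (fun hu => h.2.1 _ ⟨hu, hS s hs u (hnotS u hne) hsu⟩) (h.notMem_right hxA)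

end IsBipartitionWith

/-- The hypotheses of the theorem for `t = k + 1`. -/
structure IsHeavyBipartition (G : SimpleGraph V) (k : ℕ) (A B : Set V) : Prop where
  isBipartitionWith : IsBipartitionWith G A B
  ncard_le : B.ncard ≤ A.ncard
  nonempty : B.Nonempty
  le_ncard_neighborSet : ∀ a ∈ A, k ≤ (G.neighborSet a).ncard

namespace IsHeavyBipartition

variable {k : ℕ}

lemma left_nonempty [Finite V] (h : IsHeavyBipartition G k A B) : A.Nonempty :=
  (Set.ncard_pos (Set.toFinite _)).1
    (((Set.ncard_pos (Set.toFinite _)).2 h.nonempty).trans_le h.ncard_le)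

lemma induce (h : IsHeavyBipartition G k A B) {s : Set V}
    (hs : ∀ a ∈ A ∩ s, G.neighborSet a ⊆ s) (hcard : (B ∩ s).ncard ≤ (A ∩ s).ncard)
    (hne : (B ∩ s).Nonempty) :
    IsHeavyBipartition (G.induce s) k (Subtype.val ⁻¹' A) (Subtype.val ⁻¹' B) := by
  refine ⟨h.isBipartitionWith.induce s, ?_, ?_, fun a ha => ?_⟩
  · rwa [ncard_preimage_val, ncard_preimage_val]
  · obtain ⟨b, hb, hbs⟩ := hne
    exact ⟨⟨b, hbs⟩, hb⟩
  · rw [ncard_neighborSet_induce, Set.inter_eq_left.2 (hs a ⟨ha, a.2⟩)]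
    exact h.le_ncard_neighborSet a ha

lemma contractTo [Finite V] (h : IsHeavyBipartition G k A B) {S : Set V} {x : V} (hx : x ∈ S)
    (hxA : x ∈ A) (hS : ∀ s ∈ S, ∀ v ∉ S, G.Adj s v → v ∈ B)
    (hcard : (A ∩ (S \ {x})).ncard ≤ (B ∩ (S \ {x})).ncard) (hne : (B \ S).Nonempty)
    (hdeg : k ≤ ({v | ∃ s ∈ S, G.Adj s v} \ S).ncard) :
    IsHeavyBipartition (G.contractTo S x) k (Subtype.val ⁻¹' A) (Subtype.val ⁻¹' B) := by
  refine ⟨h.isBipartitionWith.contractTo hxA hS, ?_, ?_, fun a ha => ?_⟩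
  · rw [ncard_preimage_val, ncard_preimage_val, ← Set.sdiff_eq, ← Set.sdiff_eq]
    have := Set.ncard_inter_add_ncard_sdiff_eq_ncard A (S \ {x})
    have := Set.ncard_inter_add_ncard_sdiff_eq_ncard B (S \ {x})
    have := h.ncard_le
    omega
  · obtain ⟨v, hvB, hvS⟩ := hne
    exact ⟨⟨v, fun h' => hvS h'.1⟩, hvB⟩
  · by_cases hax : a.1 = x
    · obtain rfl : a = ⟨x, fun h => h.2 rfl⟩ := Subtype.ext hax
      rwa [ncard_neighborSet_contractTo_center hx]
    · have haS : a.1 ∉ S := (mem_or_eq_of_mem_compl_diff a.2).resolve_right hax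
      have hnadj : ∀ s ∈ S, ¬G.Adj a s := fun s hs has =>
        h.isBipartitionWith.notMem_right ha (hS s hs a haS (G.adj_symm has))
      classical
      rw [ncard_neighborSet_contractTo hx a haS, if_neg fun ⟨s, hs, h'⟩ => hnadj s hs h', add_zero]
      exact (h.le_ncard_neighborSet _ ha).trans
        (Set.ncard_le_ncard fun v hv => ⟨hv, fun hvS => hnadj v hvS hv⟩)

lemma hasSmallerMinor_of_ncard_neighborSet_le_one [Finite V] (h : IsHeavyBipartition G k A B)
    (hk : 2 ≤ k) {b : V} (hb : b ∈ B) (hdeg : (G.neighborSet b).ncard ≤ 1) :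
    HasSmallerMinor (fun H => ∃ A B, IsHeavyBipartition H k A B) G := by
  set s := (insert b (G.neighborSet b))ᶜ
  refine hasSmallerMinor_induce ((Set.ne_univ_iff_exists_notMem s).2 ⟨b, fun hbs => hbs (.inl rfl)⟩)
    ⟨_, _, h.induce (fun a ha =>
      h.isBipartitionWith.neighborSet_subset_compl_insert_neighborSet hb ha.1 ha.2) ?_ ?_⟩
  · have hB : (B ∩ s).ncard ≤ B.ncard - 1 := by
      rw [← Set.ncard_sdiff_singleton_of_mem hb]
      exact Set.ncard_le_ncard fun v hv => ⟨hv.1, fun h' => hv.2 (.inl h')⟩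
    have hA : A.ncard ≤ (A ∩ s).ncard + (G.neighborSet b).ncard := by
      refine (Set.ncard_le_ncard fun a ha => ?_).trans (Set.ncard_union_le _ _)
      by_cases has : a ∈ s
      exacts [.inl ⟨ha, has⟩,
        .inr ((not_not.1 has).resolve_left fun hab =>
          h.isBipartitionWith.notMem_right ha (hab ▸ hb))]
    have := h.ncard_le
    omega
  · obtain ⟨a, ha⟩ := h.left_nonempty
    obtain ⟨w, hw, hwb⟩ := Set.exists_ne_of_one_lt_ncard (s := G.neighborSet a)
      (by have := h.le_ncard_neighborSet a ha; omega) b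
    have hwB := h.isBipartitionWith.neighborSet_subset_right ha hw
    exact ⟨w, hwB, h.isBipartitionWith.notMem_insert_neighborSet hb hwB hwb⟩

lemma hasSmallerMinor_contractTo_insert_neighborSet [Finite V] (h : IsHeavyBipartition G k A B)
    (hk : 1 ≤ k) {a₁ a₂ b : V} (hb : b ∈ B) (hNb : G.neighborSet b = {a₁, a₂})
    (hU : k + 1 ≤ (G.neighborSet a₁ ∪ G.neighborSet a₂).ncard) :
    HasSmallerMinor (fun H => ∃ A B, IsHeavyBipartition H k A B) G := by
  have hNA := h.isBipartitionWith.neighborSet_subset_left hb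
  have ha₁ : a₁ ∈ G.neighborSet b := hNb ▸ Set.mem_insert a₁ {a₂}
  have hU' : G.neighborSet a₁ ∪ G.neighborSet a₂ ⊆ B :=
    Set.union_subset (h.isBipartitionWith.neighborSet_subset_right (hNA ha₁))
      (h.isBipartitionWith.neighborSet_subset_right (hNA (hNb ▸ Set.mem_insert_of_mem a₁ rfl)))
  refine SimpleGraph.hasSmallerMinor_contractTo (P := fun H => ∃ A B, IsHeavyBipartition H k A B)
    (connected_induce_insert_neighborSet G b)
    (.inr ha₁) (Set.mem_insert b _) (G.ne_of_adj ha₁)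
    ⟨_, _, h.contractTo (S := insert b (G.neighborSet b)) (.inr ha₁) (hNA ha₁)
      (fun s hs v hvS hsv => ?_) ?_ ?_ ?_⟩
  · rcases hs with rfl | hs
    exacts [absurd (.inr hsv) hvS, h.isBipartitionWith.neighborSet_subset_right (hNA hs) hsv]
  · calc _ ≤ ({a₂} : Set V).ncard := Set.ncard_le_ncard fun v hv' => by
          obtain ⟨hvA, hv, hva₁⟩ := hv'
          rcases hv with rfl | hv
          · exact absurd hb (h.isBipartitionWith.notMem_right hvA)
          · rw [hNb] at hv
            exact hv.resolve_left hva₁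
      _ = ({b} : Set V).ncard := by simp
      _ ≤ _ := Set.ncard_le_ncard fun v hv => by
          obtain rfl := Set.mem_singleton_iff.1 hv
          exact ⟨hb, Set.mem_insert v _, G.ne_of_adj ha₁⟩
  · obtain ⟨w, hw, hwb⟩ := Set.exists_ne_of_one_lt_ncard
      (s := G.neighborSet a₁ ∪ G.neighborSet a₂) (by omega) b
    exact ⟨w, hU' hw, h.isBipartitionWith.notMem_insert_neighborSet hb (hU' hw) hwb⟩
  · have hsub : (G.neighborSet a₁ ∪ G.neighborSet a₂) \ {b} ⊆
        {v | ∃ s ∈ insert b (G.neighborSet b), G.Adj s v} \ insert b (G.neighborSet b) :=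
      fun v hv => ⟨hv.1.elim (⟨a₁, .inr ha₁, ·⟩)
        (⟨a₂, .inr (hNb ▸ Set.mem_insert_of_mem a₁ rfl), ·⟩),
        h.isBipartitionWith.notMem_insert_neighborSet hb (hU' hv.1) hv.2⟩
    calc k ≤ ((G.neighborSet a₁ ∪ G.neighborSet a₂) \ {b}).ncard := by
          rw [Set.ncard_sdiff_singleton_of_mem (.inl (G.adj_symm ha₁))]; omega
      _ ≤ _ := Set.ncard_le_ncard hsub

lemma hasSmallerMinor_of_split [Finite V] (h : IsHeavyBipartition G k A B) {T K : Set V}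
    (hT : T ≠ Set.univ) (hKT : K ⊆ T) (hK : ∀ u ∈ K, ∀ v ∈ T, G.Adj u v → v ∈ K)
    (hAT : ∀ a ∈ A ∩ T, G.neighborSet a ⊆ T) (hcard : (A ∩ Tᶜ).ncard ≤ (B ∩ Tᶜ).ncard + 1)
    (hBK : (B ∩ K).Nonempty) (hBK' : (B ∩ (T \ K)).Nonempty) :
    HasSmallerMinor (fun H => ∃ A B, IsHeavyBipartition H k A B) G := by
  have hsplit : ∀ X : Set V, (X ∩ K).ncard + (X ∩ (T \ K)).ncard + (X ∩ Tᶜ).ncard = X.ncard :=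
    fun X => by
      rw [← Set.ncard_union_eq (Set.disjoint_left.2 fun v hv hv' => hv'.2.2 hv.2),
        ← Set.ncard_union_eq (Set.disjoint_left.2 fun v hv hv' => ?_)]
      · congr 1
        ext v
        by_cases hvT : v ∈ T
        · by_cases hvK : v ∈ K <;> simp [hvT, hvK]
        · have hvK : v ∉ K := fun h => hvT (hKT h)
          simp [hvT, hvK]
      · rcases hv with hv | hv
        exacts [hv'.2 (hKT hv.2), hv'.2 hv.2.1]
  by_cases hKcard : (B ∩ K).ncard ≤ (A ∩ K).ncard
  · refine hasSmallerMinor_induce (fun hK' => hT (Set.eq_univ_of_subset hKT hK'))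
      ⟨_, _, h.induce (fun a ha w hw => ?_) hKcard hBK⟩
    exact hK a ha.2 w (hAT a ⟨ha.1, hKT ha.2⟩ hw) hw
  · refine hasSmallerMinor_induce (fun hK' => hT (Set.eq_univ_of_subset Set.sdiff_subset hK'))
      ⟨_, _, h.induce (fun a ha w hw => ?_) ?_ hBK'⟩
    · have hwT := hAT a ⟨ha.1, ha.2.1⟩ hw
      exact ⟨hwT, fun hwK => ha.2.2 (hK w hwK a ha.2.1 (G.adj_symm hw))⟩
    · have := hsplit A
      have := hsplit B
      have := h.ncard_le
      omega

-- Either an `x`–`y` path avoiding `a₁, a₂, b` completes a `K₄` minor, or `x` and `y` lie in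
-- different parts of `G - {a₁, a₂, b}`, and one of these parts is a smaller instance.
lemma hasCliqueMinor_or_hasSmallerMinor_of_twins [Finite V] (h : IsHeavyBipartition G k A B)
    {a₁ a₂ b x y : V} (ha : a₁ ≠ a₂) (hb : b ∈ B) (hNb : G.neighborSet b = {a₁, a₂})
    (hx : x ∈ B) (hy : y ∈ B) (hxy : x ≠ y) (hxb : x ≠ b) (hyb : y ≠ b) (h₁x : G.Adj a₁ x)
    (h₁y : G.Adj a₁ y) (h₂x : G.Adj a₂ x) (h₂y : G.Adj a₂ y) :
    HasCliqueMinor G 4 ∨ HasSmallerMinor (fun H => ∃ A B, IsHeavyBipartition H k A B) G := by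
  have hNA := h.isBipartitionWith.neighborSet_subset_left hb
  have hb₁ : G.Adj a₁ b :=
    G.adj_symm (show a₁ ∈ G.neighborSet b from hNb ▸ Set.mem_insert a₁ {a₂})
  have hb₂ : G.Adj b a₂ := show a₂ ∈ G.neighborSet b from hNb ▸ Set.mem_insert_of_mem a₁ rfl
  set T := (insert b (G.neighborSet b))ᶜ
  have hxT : x ∈ T := h.isBipartitionWith.notMem_insert_neighborSet hb hx hxb
  set K := Subtype.val '' {v : T | (G.induce T).Reachable ⟨x, hxT⟩ v}
  by_cases hyK : y ∈ K
  · obtain ⟨⟨y, hyT⟩, hr, rfl⟩ := hyK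
    have hTS : ∀ v ∈ T, v ∉ ({a₁, b} : Set V) ∧ v ≠ a₂ := fun v hv => by
      simp only [T, hNb, Set.mem_compl_iff, Set.mem_insert_iff, Set.mem_singleton_iff,
        not_or] at hv
      exact ⟨by simp [hv.1, hv.2.1], hv.2.2⟩
    refine .inl (hasCliqueMinor_four_of_reachable (induce_pair_connected_of_adj hb₁)
      (connected_induce_singleton G a₂) (Set.disjoint_singleton_right.2 ?_)
      ⟨b, by simp, a₂, rfl, hb₂⟩ hxy (fun v hv => (hTS v hv).1) (fun v hv => (hTS v hv).2)
      hxT hyT hr.symm ⟨a₁, by simp, h₁x⟩ ⟨a₁, by simp, h₁y⟩ ⟨a₂, rfl, h₂x⟩ ⟨a₂, rfl, h₂y⟩)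
    rintro (h' | h')
    exacts [ha h'.symm, h.isBipartitionWith.notMem_right (hNA hb₂) (h' ▸ hb)]
  refine .inr (h.hasSmallerMinor_of_split
    ((Set.ne_univ_iff_exists_notMem T).2 ⟨b, fun hbT => hbT (.inl rfl)⟩)
    (Set.image_subset_range _ _ |>.trans (by simp)) ?_
    (fun a ha => h.isBipartitionWith.neighborSet_subset_compl_insert_neighborSet hb ha.1 ha.2) ?_
    ⟨x, hx, ⟨x, hxT⟩, Reachable.refl _, rfl⟩
    ⟨y, hy, h.isBipartitionWith.notMem_insert_neighborSet hb hy hyb, hyK⟩)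
  · rintro _ ⟨u, hu, rfl⟩ v hv huv
    exact ⟨⟨v, hv⟩, hu.trans (Adj.reachable (G := G.induce T) huv), rfl⟩
  · rw [compl_compl]
    refine (Set.ncard_le_ncard (t := {a₁, a₂}) fun v hv' => ?_).trans
      (le_of_eq_of_le (Set.ncard_pair ha) ?_)
    · obtain ⟨hvA, hv⟩ := hv'
      rcases hv with rfl | hv
      exacts [absurd hb (h.isBipartitionWith.notMem_right hvA), hNb ▸ hv]
    · have := Set.ncard_le_ncard (s := {b}) (t := B ∩ insert b (G.neighborSet b))
        (by simp [hb])
      simp only [Set.ncard_singleton] at this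
      omega

theorem hasCliqueMinor_three [Finite V] (h : IsHeavyBipartition G 2 A B) : HasCliqueMinor G 3 := by
  refine hasCliqueMinor_of_forall_hasSmallerMinor (fun H => ∃ A B, IsHeavyBipartition H 2 A B)
    ?_ G ⟨A, B, h⟩
  rintro W _ H ⟨A, B, hH⟩
  by_cases hb : ∃ b ∈ B, (H.neighborSet b).ncard ≤ 1
  · obtain ⟨b, hb, hdeg⟩ := hb
    exact .inr (hH.hasSmallerMinor_of_ncard_neighborSet_le_one le_rfl hb hdeg)
  · push Not at hb
    obtain ⟨b, -⟩ := hH.nonempty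
    have : Nonempty W := ⟨b⟩
    exact .inl (hasCliqueMinor_three_of_two_le_ncard_neighborSet fun v =>
      (hH.isBipartitionWith.1 v).elim (hH.le_ncard_neighborSet v) (hb v))

lemma hasCliqueMinor_or_hasSmallerMinor_of_ncard_neighborSet_eq_two [Finite V]
    (h : IsHeavyBipartition G 3 A B) {b : V} (hb : b ∈ B) (hdeg : (G.neighborSet b).ncard = 2) :
    HasCliqueMinor G 4 ∨ HasSmallerMinor (fun H => ∃ A B, IsHeavyBipartition H 3 A B) G := by
  obtain ⟨a₁, a₂, ha, hNb⟩ := Set.ncard_eq_two.1 hdeg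
  by_cases hU : 4 ≤ (G.neighborSet a₁ ∪ G.neighborSet a₂).ncard
  · exact .inr (h.hasSmallerMinor_contractTo_insert_neighborSet (by norm_num) hb hNb hU)
  have hA : a₁ ∈ A ∧ a₂ ∈ A := by
    simpa [Set.insert_subset_iff, hNb] using h.isBipartitionWith.neighborSet_subset_left hb
  have hfull : ∀ a ∈ A, G.neighborSet a ⊆ G.neighborSet a₁ ∪ G.neighborSet a₂ →
      G.neighborSet a = G.neighborSet a₁ ∪ G.neighborSet a₂ := fun a ha hsub =>
    Set.eq_of_subset_of_ncard_le hsub (by have := h.le_ncard_neighborSet a ha; omega)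
  have h₁ := hfull a₁ hA.1 Set.subset_union_left
  have h₂ := hfull a₂ hA.2 Set.subset_union_right
  have hb₁ : b ∈ G.neighborSet a₁ := G.adj_symm (hNb ▸ Set.mem_insert a₁ {a₂} :)
  obtain ⟨x, y, hx, hy, hxy⟩ := (Set.one_lt_ncard_iff (Set.toFinite _)).1
    (show 1 < (G.neighborSet a₁ \ {b}).ncard by
      rw [Set.ncard_sdiff_singleton_of_mem hb₁]; have := h.le_ncard_neighborSet a₁ hA.1; omega)
  have hN : ∀ v ∈ G.neighborSet a₁, G.Adj a₂ v := fun v hv => (h₂.trans h₁.symm ▸ hv :)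
  exact h.hasCliqueMinor_or_hasSmallerMinor_of_twins ha hb hNb
    (h.isBipartitionWith.neighborSet_subset_right hA.1 hx.1)
    (h.isBipartitionWith.neighborSet_subset_right hA.1 hy.1) hxy hx.2 hy.2 hx.1 hy.1
    (hN x hx.1) (hN y hy.1)

theorem hasCliqueMinor_four [Finite V] (h : IsHeavyBipartition G 3 A B) : HasCliqueMinor G 4 := by
  refine hasCliqueMinor_of_forall_hasSmallerMinor (fun H => ∃ A B, IsHeavyBipartition H 3 A B)
    ?_ G ⟨A, B, h⟩
  rintro W _ H ⟨A, B, hH⟩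
  by_cases hb₁ : ∃ b ∈ B, (H.neighborSet b).ncard ≤ 1
  · obtain ⟨b, hb, hdeg⟩ := hb₁
    exact .inr (hH.hasSmallerMinor_of_ncard_neighborSet_le_one (by norm_num) hb hdeg)
  by_cases hb₂ : ∃ b ∈ B, (H.neighborSet b).ncard = 2
  · obtain ⟨b, hb, hdeg⟩ := hb₂
    exact hH.hasCliqueMinor_or_hasSmallerMinor_of_ncard_neighborSet_eq_two hb hdeg
  push Not at hb₁ hb₂
  obtain ⟨a, ha⟩ := hH.left_nonempty
  refine .inl (hasCliqueMinor_four_of_three_le_ncard_neighborSet ?_ fun v =>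
    (hH.isBipartitionWith.1 v).elim (hH.le_ncard_neighborSet v) fun hv => by
      have := hb₁ v hv
      have := hb₂ v hv
      omega)
  calc 4 ≤ (insert a (H.neighborSet a)).ncard := by
        rw [Set.ncard_insert_of_notMem (show a ∉ H.neighborSet a from H.loopless.irrefl a)]
        have := hH.le_ncard_neighborSet a ha
        omega
    _ ≤ Nat.card W := Set.ncard_le_card _

end IsHeavyBipartition

end Bipartite

/-- For `t ∈ {1,2,3,4}`: if `G` admits a bipartition `(A,B)` with `|A| ≥ |B| > 0`
such that every vertex in `A` has degree at least `t - 1`, then `G` has a `K_t` minor. -/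
theorem smallCases {V : Type} [Fintype V] (t : ℕ) (ht : t ∈ ({1, 2, 3, 4} : Set ℕ))
    (G : SimpleGraph V) (A B : Set V)
    (hbip : IsBipartitionWith G A B) (hcard : B.ncard ≤ A.ncard) (hB : B.Nonempty)
    (hdeg : ∀ a ∈ A, t - 1 ≤ (G.neighborSet a).ncard) :
    HasCliqueMinor G t := by
  have h : IsHeavyBipartition G (t - 1) A B := ⟨hbip, hcard, hB, hdeg⟩
  rcases ht with rfl | rfl | rfl | rfl
  · obtain ⟨b, -⟩ := hB
    exact hasCliqueMinor_of_adj ![b] fun i j hij => absurd (Subsingleton.elim i j) hij.ne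
  · obtain ⟨a, ha⟩ := h.left_nonempty
    obtain ⟨v, hv⟩ := Set.nonempty_of_ncard_ne_zero (s := G.neighborSet a)
      (by have := hdeg a ha; omega)
    exact hasCliqueMinor_of_adj ![a, v] fun i j hij => by
      fin_cases i <;> fin_cases j <;> simp_all
  · exact h.hasCliqueMinor_three
  · exact h.hasCliqueMinor_four
end

section
/- If a finite simple graph G admits a bipartition (A,B) with |A| ≥ |B| > 0 such that every vertex in A has degree at least three, then G has a K_4 minor. -/
open SimpleGraph Function

/-!
Replace the bipartition by an independent set `A` of vertices of degree at least three with
`|V| ≤ 2|A|`: unlike bipartiteness, this survives the contractions below, which create edges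
outside `A`. Pick `a ∈ A` with neighbours `b, x, y`. If some pair, say `b, x`, has no common
neighbour in `A` other than `a`, contracting the path `b a x` to a vertex gives a smaller
instance. If `a` has a twin `t` (also adjacent to `b, x, y`) and no third vertex of `A` sees two
of `b, x, y`, contract `{a, t, b, x, y}` instead. Otherwise the common neighbours of the three
pairs give branch sets of a `K₄` minor centred at `a`.
-/

namespace SimpleGraph

variable {V W : Type*} {G : SimpleGraph V} {π : V → W}

def contract (G : SimpleGraph V) (π : V → W) : SimpleGraph W :=
  fromRel fun x y => ∃ u v, π u = x ∧ π v = y ∧ G.Adj u v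

lemma contract_adj {x y : W} :
    (G.contract π).Adj x y ↔ x ≠ y ∧ ∃ u v, π u = x ∧ π v = y ∧ G.Adj u v := by
  refine (fromRel_adj _ _ _).trans (and_congr_right fun _ => or_iff_left_of_imp ?_)
  rintro ⟨u, v, rfl, rfl, h⟩
  exact ⟨v, u, rfl, rfl, h.symm⟩

lemma neighborSet_contract {v : V} (hv : π ⁻¹' {π v} = {v}) :
    (G.contract π).neighborSet (π v) = π '' G.neighborSet v := by
  have fibre : ∀ {u}, π u = π v → u = v := fun h => (hv.subset h : _ ∈ ({v} : Set V))
  ext w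
  simp only [mem_neighborSet, contract_adj, Set.mem_image]
  constructor
  · rintro ⟨-, u, u', hu, rfl, h⟩
    exact ⟨u', fibre hu ▸ h, rfl⟩
  · rintro ⟨u, h, rfl⟩
    exact ⟨fun he => h.ne (fibre he.symm).symm, v, u, rfl, rfl, h⟩

lemma Connected.preimage_contract (hfib : ∀ w, (G.induce (π ⁻¹' {w})).Connected)
    (hπ : Surjective π) {T : Set W} (hT : ((G.contract π).induce T).Connected) :
    (G.induce (π ⁻¹' T)).Connected := by
  set H := G.induce (π ⁻¹' T)
  have fibre : ∀ u v : π ⁻¹' T, π u = π v → H.Reachable u v := by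
    rintro ⟨u, hu⟩ ⟨v, hv⟩ huv
    have hsub : π ⁻¹' {π u} ⊆ π ⁻¹' T := fun z (hz : π z = π u) => show π z ∈ T from hz ▸ hu
    exact ((hfib (π u)).preconnected ⟨u, rfl⟩ ⟨v, huv.symm⟩).map (induceHomOfLE G hsub).toHom
  have lift : ∀ {w w' : T} (_ : ((G.contract π).induce T).Walk w w') (u v : π ⁻¹' T),
      π u = w → π v = w' → H.Reachable u v := by
    intro w w' p
    induction p with
    | nil => exact fun u v hu hv => fibre u v (hu.trans hv.symm)
    | cons h _ ih =>
      intro u v hu hv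
      obtain ⟨-, a, b, ha, hb, hab⟩ := contract_adj.1 h
      have haT : a ∈ π ⁻¹' T := by simp [Set.mem_preimage, ha]
      have hbT : b ∈ π ⁻¹' T := by simp [Set.mem_preimage, hb]
      exact (fibre u ⟨a, haT⟩ (hu.trans ha.symm)).trans
        ((show H.Adj ⟨a, haT⟩ ⟨b, hbT⟩ from hab).reachable.trans (ih ⟨b, hbT⟩ v hb hv))
  obtain ⟨w⟩ := hT.nonempty
  obtain ⟨u, hu⟩ := hπ w
  refine (connected_iff _).2 ⟨fun u v => ?_, ⟨⟨u, by simp [Set.mem_preimage, hu]⟩⟩⟩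
  obtain ⟨p⟩ := hT.preconnected ⟨π u, u.2⟩ ⟨π v, v.2⟩
  exact lift p u v rfl rfl

lemma induce_insert_connected {S : Set V} {v w : V} (hS : (G.induce S).Connected)
    (hv : v ∈ S) (hwv : G.Adj w v) : (G.induce (insert w S)).Connected := by
  rw [Set.insert_eq]
  exact connected_induce_union (by simp [connected_top.preconnected]) hS.preconnected rfl hv hwv

end SimpleGraph

theorem HasCliqueMinor.of_contract {V W : Type*} {G : SimpleGraph V} {π : V → W}
    (hfib : ∀ w, (G.induce (π ⁻¹' {w})).Connected) (hπ : Surjective π) {t : ℕ}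
    (h : HasCliqueMinor (G.contract π) t) : HasCliqueMinor G t := by
  obtain ⟨f, hne, hconn, hdisj, hadj⟩ := h
  refine ⟨fun i => π ⁻¹' f i, fun i => (hne i).preimage hπ,
    fun i => (hconn i).preimage_contract hfib hπ, fun i j hij => (hdisj hij).preimage π,
    fun i j hij => ?_⟩
  obtain ⟨x, hx, y, hy, hxy⟩ := hadj i j hij
  obtain ⟨-, u, v, rfl, rfl, huv⟩ := contract_adj.1 hxy
  exact ⟨u, hx, v, hy, huv⟩

section Collapse

variable {V : Type*} {S : Set V}

open Classical in
noncomputable def collapse (S : Set V) (v : V) : Option ↥Sᶜ :=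
  if h : v ∈ S then none else some ⟨v, h⟩

lemma collapse_apply_of_mem {v : V} (h : v ∈ S) : collapse S v = none := dif_pos h

lemma collapse_apply_of_notMem {v : V} (h : v ∉ S) : collapse S v = some ⟨v, h⟩ := dif_neg h

lemma collapse_eq_collapse {u v : V} (hv : v ∉ S) : collapse S u = collapse S v ↔ u = v := by
  by_cases hu : u ∈ S
  · simp [collapse_apply_of_mem hu, collapse_apply_of_notMem hv, ne_of_mem_of_not_mem hu hv]
  · simp [collapse_apply_of_notMem hu, collapse_apply_of_notMem hv]

lemma preimage_collapse_none : collapse S ⁻¹' {none} = S := by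
  ext v
  by_cases hv : v ∈ S <;> simp [collapse_apply_of_mem, collapse_apply_of_notMem, hv]

lemma preimage_collapse_of_notMem {v : V} (hv : v ∉ S) :
    collapse S ⁻¹' {collapse S v} = {v} := by
  ext u
  exact collapse_eq_collapse hv

lemma collapse_surjective (hS : S.Nonempty) : Surjective (collapse S) := by
  rintro (_ | ⟨v, hv⟩)
  · exact ⟨hS.some, collapse_apply_of_mem hS.some_mem⟩
  · exact ⟨v, collapse_apply_of_notMem hv⟩

lemma injOn_collapse {T : Set V} (hT : (T ∩ S).Subsingleton) : Set.InjOn (collapse S) T := by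
  intro u hu v hv huv
  by_cases hvS : v ∈ S
  · by_cases huS : u ∈ S
    · exact hT ⟨hu, huS⟩ ⟨hv, hvS⟩
    · exact ((collapse_eq_collapse huS).1 huv.symm).symm
  · exact (collapse_eq_collapse hvS).1 huv

lemma nat_card_collapse [Finite V] : Nat.card (Option ↥Sᶜ) + S.ncard = Nat.card V + 1 := by
  rw [Finite.card_option, Nat.card_coe_set_eq, add_right_comm, add_comm Sᶜ.ncard,
    Set.ncard_add_ncard_compl]

lemma induce_preimage_collapse_connected {G : SimpleGraph V} (hS : (G.induce S).Connected)
    (w : Option ↥Sᶜ) : (G.induce (collapse S ⁻¹' {w})).Connected := by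
  rcases w with _ | ⟨v, hv⟩
  · rwa [preimage_collapse_none]
  · rw [← collapse_apply_of_notMem hv, preimage_collapse_of_notMem hv, induce_singleton_eq_top]
    exact connected_top

end Collapse

section Reduction

variable {V : Type*} {G : SimpleGraph V} {A S : Set V}

/-- Contracting such a set `S` (via `collapse S`) removes `|S ∩ A|` vertices of `A` and as many
vertices outside `A`, and no vertex of `A \ S` loses a neighbour. -/
structure IsReducingSet (G : SimpleGraph V) (A S : Set V) : Prop where
  connected : (G.induce S).Connected
  nonempty_inter : (S ∩ A).Nonempty
  ncard_sdiff : (S \ A).ncard = (S ∩ A).ncard + 1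
  subsingleton_neighborSet_inter : ∀ a ∈ A \ S, (G.neighborSet a ∩ S).Subsingleton

lemma SimpleGraph.IsIndepSet.image_collapse (hA : G.IsIndepSet A) :
    (G.contract (collapse S)).IsIndepSet (collapse S '' (A \ S)) := by
  rintro _ ⟨a, ha, rfl⟩ _ ⟨b, hb, rfl⟩ - hab
  rw [← mem_neighborSet, neighborSet_contract (preimage_collapse_of_notMem ha.2)] at hab
  obtain ⟨c, hc, hcb⟩ := hab
  rw [collapse_eq_collapse hb.2] at hcb
  subst hcb
  exact hA ha.1 hb.1 hc.ne hc

lemma ncard_neighborSet_contract_collapse {v : V} (hv : v ∉ S)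
    (h : (G.neighborSet v ∩ S).Subsingleton) :
    ((G.contract (collapse S)).neighborSet (collapse S v)).ncard = (G.neighborSet v).ncard := by
  rw [neighborSet_contract (preimage_collapse_of_notMem hv), (injOn_collapse h).ncard_image]

lemma IsReducingSet.nat_card_collapse_lt_and_le [Finite V] (hS : IsReducingSet G A S)
    (hcard : Nat.card V ≤ 2 * A.ncard) :
    Nat.card (Option ↥Sᶜ) < Nat.card V ∧
      Nat.card (Option ↥Sᶜ) ≤ 2 * (collapse S '' (A \ S)).ncard := by
  have hV := nat_card_collapse (S := S)
  have hSA := Set.ncard_inter_add_ncard_sdiff_eq_ncard S A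
  have hAS := Set.ncard_inter_add_ncard_sdiff_eq_ncard A S
  have himage : (collapse S '' (A \ S)).ncard = (A \ S).ncard :=
    (injOn_collapse (by simp)).ncard_image
  have hpos := (Set.ncard_pos (Set.toFinite _)).2 hS.nonempty_inter
  have hbalance := hS.ncard_sdiff
  rw [Set.inter_comm] at hAS
  omega

lemma isReducingSet_path (hA : G.IsIndepSet A) {a u v : V} (ha : a ∈ A) (hu : u ∉ A)
    (hv : v ∉ A) (huv : u ≠ v) (hau : G.Adj a u) (hav : G.Adj a v)
    (hcov : ¬ ∃ c ∈ A, c ≠ a ∧ G.Adj c u ∧ G.Adj c v) :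
    IsReducingSet G A {u, a, v} where
  connected := induce_insert_connected (induce_pair_connected_of_adj hav) (by simp) hau.symm
  nonempty_inter := ⟨a, by simp, ha⟩
  ncard_sdiff := by
    rw [show ({u, a, v} \ A : Set V) = {u, v} by grind,
      show ({u, a, v} ∩ A : Set V) = {a} by grind, Set.ncard_pair huv, Set.ncard_singleton]
  subsingleton_neighborSet_inter := by
    rintro c ⟨hc, hcS⟩ z₁ ⟨hz₁, hz₁S⟩ z₂ ⟨hz₂, hz₂S⟩
    have hca : ¬ G.Adj c a := hA hc ha (by grind)
    simp only [mem_neighborSet] at hz₁ hz₂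
    grind

lemma isReducingSet_twins (hA : G.IsIndepSet A) {a t b x y : V} (ha : a ∈ A) (ht : t ∈ A)
    (hb : b ∉ A) (hx : x ∉ A) (hy : y ∉ A) (hat : a ≠ t) (hbx : b ≠ x) (hby : b ≠ y)
    (hxy : x ≠ y) (hab : G.Adj a b) (hax : G.Adj a x) (hay : G.Adj a y) (htb : G.Adj t b)
    (hcov : ¬ ∃ c ∈ A, c ≠ a ∧ c ≠ t ∧
      (G.Adj c b ∧ G.Adj c x ∨ G.Adj c x ∧ G.Adj c y ∨ G.Adj c b ∧ G.Adj c y)) :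
    IsReducingSet G A {x, y, t, a, b} where
  connected := induce_insert_connected (induce_insert_connected (induce_insert_connected
    (induce_pair_connected_of_adj hab) (by simp) htb) (by simp) hay.symm) (by simp) hax.symm
  nonempty_inter := ⟨a, by simp, ha⟩
  ncard_sdiff := by
    rw [show ({x, y, t, a, b} \ A : Set V) = {b, x, y} by grind,
      show ({x, y, t, a, b} ∩ A : Set V) = {a, t} by grind, Set.ncard_pair hat,
      Set.ncard_eq_three.2 ⟨b, x, y, hbx, hby, hxy, rfl⟩]
  subsingleton_neighborSet_inter := by
    rintro c ⟨hc, hcS⟩ z₁ ⟨hz₁, hz₁S⟩ z₂ ⟨hz₂, hz₂S⟩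
    have hca : ¬ G.Adj c a := hA hc ha (by grind)
    have hct : ¬ G.Adj c t := hA hc ht (by grind)
    simp only [mem_neighborSet] at hz₁ hz₂
    grind

end Reduction

section FourCliqueMinor

variable {V : Type*} {G : SimpleGraph V}

lemma hasCliqueMinor_of_forall_lt {t : ℕ} (f : Fin t → Set V)
    (hc : ∀ i, (G.induce (f i)).Connected)
    (h : ∀ i j, i < j → Disjoint (f i) (f j) ∧ ∃ u ∈ f i, ∃ v ∈ f j, G.Adj u v) :
    HasCliqueMinor G t := by
  refine ⟨f, fun i => Set.nonempty_coe_sort.1 (hc i).nonempty, hc, fun i j hij => ?_,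
    fun i j hij => ?_⟩ <;> rcases hij.lt_or_gt with hij | hij
  · exact (h i j hij).1
  · exact (h j i hij).1.symm
  · exact (h i j hij).2
  · obtain ⟨u, hu, v, hv, huv⟩ := (h j i hij).2
    exact ⟨v, hv, u, hu, huv.symm⟩

lemma hasCliqueMinor_four_of_hub {a : V} {S₁ S₂ S₃ : Set V}
    (hc₁ : (G.induce S₁).Connected) (hc₂ : (G.induce S₂).Connected)
    (hc₃ : (G.induce S₃).Connected) (ha₁ : a ∉ S₁) (ha₂ : a ∉ S₂) (ha₃ : a ∉ S₃)
    (h₁₂ : Disjoint S₁ S₂) (h₁₃ : Disjoint S₁ S₃) (h₂₃ : Disjoint S₂ S₃)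
    (e₁ : ∃ v ∈ S₁, G.Adj a v) (e₂ : ∃ v ∈ S₂, G.Adj a v) (e₃ : ∃ v ∈ S₃, G.Adj a v)
    (e₁₂ : ∃ u ∈ S₁, ∃ v ∈ S₂, G.Adj u v) (e₁₃ : ∃ u ∈ S₁, ∃ v ∈ S₃, G.Adj u v)
    (e₂₃ : ∃ u ∈ S₂, ∃ v ∈ S₃, G.Adj u v) :
    HasCliqueMinor G 4 := by
  refine hasCliqueMinor_of_forall_lt ![{a}, S₁, S₂, S₃] (fun i => ?_) (fun i j hij => ?_)
  · fin_cases i <;> simp [*, connected_top]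
  · fin_cases i <;> fin_cases j <;> simp_all [Fin.lt_def]

variable {A : Set V}

lemma hasCliqueMinor_four_of_subdivided_wheel {a p q r b x y : V}
    (ha : a ∈ A) (hp : p ∈ A) (hq : q ∈ A) (hr : r ∈ A) (hb : b ∉ A) (hx : x ∉ A) (hy : y ∉ A)
    (hap : a ≠ p) (haq : a ≠ q) (har : a ≠ r) (hpq : p ≠ q) (hpr : p ≠ r) (hqr : q ≠ r)
    (hbx : b ≠ x) (hby : b ≠ y) (hxy : x ≠ y)
    (hab : G.Adj a b) (hax : G.Adj a x) (hay : G.Adj a y) (hpb : G.Adj p b) (hpx : G.Adj p x)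
    (hqx : G.Adj q x) (hqy : G.Adj q y) (hry : G.Adj r y) (hrb : G.Adj r b) :
    HasCliqueMinor G 4 := by
  refine hasCliqueMinor_four_of_hub (a := a) (S₁ := {b, p}) (S₂ := {x, q}) (S₃ := {y, r})
    (induce_pair_connected_of_adj hpb.symm) (induce_pair_connected_of_adj hqx.symm)
    (induce_pair_connected_of_adj hry.symm) ?_ ?_ ?_ ?_ ?_ ?_ ⟨b, by simp, hab⟩ ⟨x, by simp, hax⟩
    ⟨y, by simp, hay⟩ ⟨p, by simp, x, by simp, hpx⟩ ⟨b, by simp, r, by simp, hrb.symm⟩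
    ⟨q, by simp, y, by simp, hqy⟩ <;> grind

lemma hasCliqueMinor_four_of_twins {a t c u v w : V}
    (ha : a ∈ A) (ht : t ∈ A) (hc : c ∈ A) (hu : u ∉ A) (hv : v ∉ A) (hw : w ∉ A)
    (hat : a ≠ t) (hac : a ≠ c) (htc : t ≠ c) (huv : u ≠ v) (huw : u ≠ w) (hvw : v ≠ w)
    (hau : G.Adj a u) (hav : G.Adj a v) (haw : G.Adj a w) (htu : G.Adj t u) (htv : G.Adj t v)
    (htw : G.Adj t w) (hcu : G.Adj c u) (hcv : G.Adj c v) :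
    HasCliqueMinor G 4 := by
  refine hasCliqueMinor_four_of_hub (a := a) (S₁ := {u, c}) (S₂ := {v}) (S₃ := {w, t})
    (induce_pair_connected_of_adj hcu.symm) (by simp [connected_top])
    (induce_pair_connected_of_adj htw.symm) ?_ ?_ ?_ ?_ ?_ ?_ ⟨u, by simp, hau⟩ ⟨v, by simp, hav⟩
    ⟨w, by simp, haw⟩ ⟨c, by simp, v, by simp, hcv⟩ ⟨u, by simp, t, by simp, htu.symm⟩
    ⟨v, by simp, t, by simp, htv.symm⟩ <;> grind

end FourCliqueMinor

section LocalStructure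

variable {V : Type*} {G : SimpleGraph V} {A : Set V}

lemma exists_isReducingSet_or_hasCliqueMinor_of_twin (hA : G.IsIndepSet A) {a t b x y : V}
    (ha : a ∈ A) (ht : t ∈ A) (hb : b ∉ A) (hx : x ∉ A) (hy : y ∉ A) (hat : a ≠ t)
    (hbx : b ≠ x) (hby : b ≠ y) (hxy : x ≠ y) (hab : G.Adj a b) (hax : G.Adj a x)
    (hay : G.Adj a y) (htb : G.Adj t b) (htx : G.Adj t x) (hty : G.Adj t y) :
    (∃ S, IsReducingSet G A S) ∨ HasCliqueMinor G 4 := by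
  by_cases hcov : ∃ c ∈ A, c ≠ a ∧ c ≠ t ∧
      (G.Adj c b ∧ G.Adj c x ∨ G.Adj c x ∧ G.Adj c y ∨ G.Adj c b ∧ G.Adj c y)
  · right
    obtain ⟨c, hc, hca, hct, ⟨hcb, hcx⟩ | ⟨hcx, hcy⟩ | ⟨hcb, hcy⟩⟩ := hcov
    · exact hasCliqueMinor_four_of_twins ha ht hc hb hx hy hat hca.symm hct.symm hbx hby hxy
        hab hax hay htb htx hty hcb hcx
    · exact hasCliqueMinor_four_of_twins ha ht hc hx hy hb hat hca.symm hct.symm hxy hbx.symm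
        hby.symm hax hay hab htx hty htb hcx hcy
    · exact hasCliqueMinor_four_of_twins ha ht hc hb hy hx hat hca.symm hct.symm hby hbx
        hxy.symm hab hay hax htb hty htx hcb hcy
  · exact Or.inl ⟨_, isReducingSet_twins hA ha ht hb hx hy hat hbx hby hxy hab hax hay htb hcov⟩

lemma exists_isReducingSet_or_hasCliqueMinor [Finite V] (hA : G.IsIndepSet A)
    (hdeg : ∀ a ∈ A, 3 ≤ (G.neighborSet a).ncard) {a : V} (ha : a ∈ A) :
    (∃ S, IsReducingSet G A S) ∨ HasCliqueMinor G 4 := by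
  obtain ⟨b, x, y, hab, hax, hay, hbx, hby, hxy⟩ :=
    (Set.two_lt_ncard_iff (Set.toFinite _)).1 (hdeg a ha)
  rw [mem_neighborSet] at hab hax hay
  have hout : ∀ {z}, G.Adj a z → z ∉ A := fun h hz => hA ha hz h.ne h
  by_cases htwin : ∃ t ∈ A, t ≠ a ∧ G.Adj t b ∧ G.Adj t x ∧ G.Adj t y
  · obtain ⟨t, ht, hta, htb, htx, hty⟩ := htwin
    exact exists_isReducingSet_or_hasCliqueMinor_of_twin hA ha ht (hout hab) (hout hax)
      (hout hay) hta.symm hbx hby hxy hab hax hay htb htx hty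
  by_cases hp : ∃ p ∈ A, p ≠ a ∧ G.Adj p b ∧ G.Adj p x
  swap
  · exact Or.inl ⟨_, isReducingSet_path hA ha (hout hab) (hout hax) hbx hab hax hp⟩
  by_cases hq : ∃ q ∈ A, q ≠ a ∧ G.Adj q x ∧ G.Adj q y
  swap
  · exact Or.inl ⟨_, isReducingSet_path hA ha (hout hax) (hout hay) hxy hax hay hq⟩
  by_cases hr : ∃ r ∈ A, r ≠ a ∧ G.Adj r y ∧ G.Adj r b
  swap
  · exact Or.inl ⟨_, isReducingSet_path hA ha (hout hay) (hout hab) hby.symm hay hab hr⟩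
  obtain ⟨p, hp, hpa, hpb, hpx⟩ := hp
  obtain ⟨q, hq, hqa, hqx, hqy⟩ := hq
  obtain ⟨r, hr, hra, hry, hrb⟩ := hr
  refine Or.inr (hasCliqueMinor_four_of_subdivided_wheel ha hp hq hr (hout hab) (hout hax)
    (hout hay) hpa.symm hqa.symm hra.symm ?_ ?_ ?_ hbx hby hxy hab hax hay hpb hpx hqx hqy hry
    hrb) <;> rintro rfl
  · exact htwin ⟨p, hp, hpa, hpb, hpx, hqy⟩
  · exact htwin ⟨p, hp, hpa, hpb, hpx, hry⟩
  · exact htwin ⟨q, hq, hqa, hrb, hqx, hqy⟩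

end LocalStructure

theorem hasCliqueMinor_four_of_isIndepSet {W : Type*} [Finite W] [Nonempty W]
    (G : SimpleGraph W) (A : Set W) (hA : G.IsIndepSet A)
    (hdeg : ∀ a ∈ A, 3 ≤ (G.neighborSet a).ncard) (hcard : Nat.card W ≤ 2 * A.ncard) :
    HasCliqueMinor G 4 := by
  obtain ⟨n, hn⟩ : ∃ n, Nat.card W = n := ⟨_, rfl⟩
  induction n using Nat.strong_induction_on generalizing W with
  | _ n ih =>
  obtain ⟨a, ha⟩ : A.Nonempty :=
    Set.nonempty_of_ncard_ne_zero (by have := Nat.card_pos (α := W); omega)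
  obtain ⟨S, hS⟩ | hK4 := exists_isReducingSet_or_hasCliqueMinor hA hdeg ha
  · obtain ⟨hlt, hle⟩ := hS.nat_card_collapse_lt_and_le hcard
    refine HasCliqueMinor.of_contract (induce_preimage_collapse_connected hS.connected)
      (collapse_surjective (hS.nonempty_inter.mono Set.inter_subset_left)) ?_
    refine ih _ (hn ▸ hlt) _ _ hA.image_collapse ?_ hle rfl
    rintro _ ⟨a, ha, rfl⟩
    rw [ncard_neighborSet_contract_collapse ha.2 (hS.subsingleton_neighborSet_inter a ha)]
    exact hdeg a ha.1
  · exact hK4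

section Bipartition

variable {V : Type*} {G : SimpleGraph V} {A B : Set V}

lemma IsBipartitionWith.isIndepSet (h : IsBipartitionWith G A B) : G.IsIndepSet A :=
  fun _ hu v hv _ huv => h.2.1 v ⟨hv, (h.2.2 huv).1 hu⟩

lemma IsBipartitionWith.ncard_add_ncard [Finite V] (h : IsBipartitionWith G A B) :
    A.ncard + B.ncard = Nat.card V := by
  have hB : B = Aᶜ := by
    ext v
    have := h.1 v
    have := h.2.1 v
    simp only [Set.mem_compl_iff]
    tauto
  rw [hB, Set.ncard_add_ncard_compl]

end Bipartition

/-- If `G` admits a bipartition `(A,B)` with `|A| ≥ |B| > 0` such that every vertex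
in `A` has degree at least three, then `G` has a `K_4` minor. -/
theorem minDegreeThree_hasK4Minor {V : Type} [Fintype V] (G : SimpleGraph V) (A B : Set V)
    (hbip : IsBipartitionWith G A B) (hcard : B.ncard ≤ A.ncard) (hB : B.Nonempty)
    (hdeg : ∀ a ∈ A, 3 ≤ (G.neighborSet a).ncard) :
    HasCliqueMinor G 4 := by
  have : Nonempty V := ⟨hB.some⟩
  refine hasCliqueMinor_four_of_isIndepSet G A hbip.isIndepSet hdeg ?_
  have := hbip.ncard_add_ncard
  omega
end

section
/- There exists a bipartite graph G with bipartition (A,B), with |A| ≥ |B| > 0, in which every vertex of A has degree at least four, such that G has no K_5 minor. -/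
open SimpleGraph Function

namespace T
def cp (v : Fin 18) : Fin 4 := if v.val < 3 then 0 else ⟨(v.val - 3) / 5 + 1, by omega⟩
def isx (v : Fin 18) : Bool := 3 ≤ v.val ∧ (v.val - 3) % 5 < 3
def edg (u v : Fin 18) : Bool :=
  (cp u ≠ 0 && cp v == cp u && isx u && !isx v)
  || (cp u ≠ 0 && isx u && cp v == 0 && (v.val ≠ (u.val - 3) % 5))
def G : SimpleGraph (Fin 18) := SimpleGraph.fromRel (fun u v => edg u v = true)
instance : DecidableRel G.Adj := fun u v =>
  decidable_of_iff _ (SimpleGraph.fromRel_adj _ u v).symm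
def xs (k : Fin 4) (j : Fin 3) : Fin 18 := ⟨(5 * k.val - 2 + j.val) % 18, Nat.mod_lt _ (by norm_num)⟩
def bad (_k : Fin 4) (j : Fin 3) : Fin 18 := ⟨j.val, by omega⟩

lemma F1 : ∀ u v, G.Adj u v → cp u = cp v ∨ cp u = 0 ∨ cp v = 0 := by decide
lemma F2 : ∀ u v, G.Adj u v → cp u ≠ 0 → cp v = 0 → isx u = true := by decide
lemma F3 : ∀ u v, G.Adj u v → cp v ≠ 0 → isx v = false → (cp u = cp v ∧ isx u = true) := by decide
lemma F4 : ∀ k : Fin 4, k ≠ 0 → ∀ v, (cp v = k ∧ isx v = true) ↔ (v = xs k 0 ∨ v = xs k 1 ∨ v = xs k 2) := by decide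
lemma F5 : ∀ k : Fin 4, k ≠ 0 → ∀ s, cp s = 0 → ¬(G.Adj s (xs k 0) ∧ G.Adj s (xs k 1) ∧ G.Adj s (xs k 2)) := by decide
lemma F6 : ∀ k : Fin 4, k ≠ 0 → ∀ j, cp (bad k j) = 0 ∧ ¬ G.Adj (bad k j) (xs k j) := by decide
lemma F7 : ∀ k : Fin 4, k ≠ 0 → ∀ j j' : Fin 3, j ≠ j' → bad k j ≠ bad k j' := by decide
lemma F8 : ∀ v, cp v = 0 ↔ (v = 0 ∨ v = 1 ∨ v = 2) := by decide
lemma FJ : ∀ j1 j2 : Fin 3, j1 ≠ j2 → ∃ j3, j3 ≠ j1 ∧ j3 ≠ j2 ∧ ∀ j : Fin 3, j = j1 ∨ j = j2 ∨ j = j3 := by decide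

section helpers
variable {α : Type*} [DecidableEq α]

lemma card3 (a b c : α) : ({a, b, c} : Finset α).card ≤ 3 := by
  apply le_trans (Finset.card_insert_le _ _)
  have h1 := Finset.card_insert_le b ({c} : Finset α)
  have h2 : ({c} : Finset α).card = 1 := Finset.card_singleton c
  omega

lemma pigeon4 (a b c : α) (v : Fin 4 → α) (h : ∀ i, v i = a ∨ v i = b ∨ v i = c) :
    ∃ i j, i ≠ j ∧ v i = v j := by
  have hcard : ({a, b, c} : Finset α).card < (Finset.univ : Finset (Fin 4)).card := by
    have := card3 a b c
    simp only [Finset.card_univ, Fintype.card_fin]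
    omega
  obtain ⟨i, -, j, -, hij, he⟩ :=
    Finset.exists_ne_map_eq_of_card_lt_of_maps_to (f := v) hcard
      (fun i _ => by rcases h i with h' | h' | h' <;> simp [h'])
  exact ⟨i, j, hij, he⟩

lemma pigeon4' (a b c v1 v2 v3 v4 : α)
    (h12 : v1 ≠ v2) (h13 : v1 ≠ v3) (h14 : v1 ≠ v4)
    (h23 : v2 ≠ v3) (h24 : v2 ≠ v4) (h34 : v3 ≠ v4)
    (m1 : v1 = a ∨ v1 = b ∨ v1 = c) (m2 : v2 = a ∨ v2 = b ∨ v2 = c)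
    (m3 : v3 = a ∨ v3 = b ∨ v3 = c) (m4 : v4 = a ∨ v4 = b ∨ v4 = c) : False := by
  obtain ⟨i, j, hij, heq⟩ := pigeon4 a b c ![v1, v2, v3, v4]
    (by intro i; fin_cases i <;> simpa using (by assumption))
  fin_cases i <;> fin_cases j <;> simp_all

lemma perm3 (a b c : α) (v : Fin 3 → α) (hinj : ∀ i j, v i = v j → i = j)
    (h : ∀ i, v i = a ∨ v i = b ∨ v i = c) (P : α → Prop) (hv : ∀ i, P (v i)) :
    P a ∧ P b ∧ P c := by
  have hinj' : Function.Injective v := fun i j => hinj i j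
  have hsub : (Finset.univ : Finset (Fin 3)).image v ⊆ {a, b, c} := by
    intro x hx
    simp only [Finset.mem_image] at hx
    obtain ⟨i, -, rfl⟩ := hx
    rcases h i with h' | h' | h' <;> simp [h']
  have hcard : ({a, b, c} : Finset α).card ≤ ((Finset.univ : Finset (Fin 3)).image v).card := by
    rw [Finset.card_image_of_injective _ hinj']
    simpa using card3 a b c
  have heq := Finset.eq_of_subset_of_card_le hsub hcard
  have hmem : ∀ x ∈ ({a, b, c} : Finset α), P x := by
    intro x hx
    rw [← heq] at hx
    simp only [Finset.mem_image] at hx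
    obtain ⟨i, -, rfl⟩ := hx
    exact hv i
  exact ⟨hmem a (by simp), hmem b (by simp), hmem c (by simp)⟩

lemma perm3' (a b c v1 v2 v3 : α) (h12 : v1 ≠ v2) (h13 : v1 ≠ v3) (h23 : v2 ≠ v3)
    (m1 : v1 = a ∨ v1 = b ∨ v1 = c) (m2 : v2 = a ∨ v2 = b ∨ v2 = c)
    (m3 : v3 = a ∨ v3 = b ∨ v3 = c) (P : α → Prop)
    (p1 : P v1) (p2 : P v2) (p3 : P v3) : P a ∧ P b ∧ P c := by
  apply perm3 a b c ![v1, v2, v3]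
  · intro i j hij; fin_cases i <;> fin_cases j <;> simp_all
  · intro i; fin_cases i <;> simpa using (by assumption)
  · intro i; fin_cases i <;> simpa using (by assumption)

lemma choose_on {β : Type*} [Inhabited β] {γ : Type*} (s : Finset γ) (P : γ → β → Prop)
    (h : ∀ i ∈ s, ∃ v, P i v) : ∃ g : γ → β, ∀ i ∈ s, P i (g i) := by
  classical
  refine ⟨fun i => if h' : ∃ v, P i v then h'.choose else default, fun i hi => ?_⟩
  have h' : ∃ v, P i v := h i hi
  simp only [dif_pos h']
  exact h'.choose_spec
end helpers

lemma induce_adj {s : Set (Fin 18)} {a b : ↥s} (h : (G.induce s).Adj a b) : G.Adj a.val b.val := by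
  simpa using h

lemma exit_aux {s : Set (Fin 18)} {k : Fin 4} (hk : k ≠ 0) :
    ∀ {a b : ↥s} (_p : (G.induce s).Walk a b), cp a.val = k → cp b.val ≠ k →
      ∃ w ∈ s, cp w = k ∧ isx w = true := by
  intro a b p
  induction p with
  | nil => intro h1 h2; exact absurd h1 h2
  | @cons u v w h p ih =>
    intro h1 h2
    by_cases hm : cp v.val = k
    · exact ih hm h2
    · have hadj := induce_adj h
      have hv0 : cp v.val = 0 := by
        rcases F1 _ _ hadj with h' | h' | h'
        · exact absurd (h' ▸ h1) hm
        · exact absurd (h1 ▸ h') hk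
        · exact h'
      exact ⟨u.val, u.prop, h1, F2 _ _ hadj (by rw [h1]; exact hk) hv0⟩

lemma exit {s : Set (Fin 18)} {k : Fin 4} (hk : k ≠ 0) (hc : (G.induce s).Connected)
    {u v : Fin 18} (hu : u ∈ s) (hv : v ∈ s) (hcu : cp u = k) (hcv : cp v ≠ k) :
    ∃ w ∈ s, cp w = k ∧ isx w = true := by
  obtain ⟨p⟩ := hc.preconnected ⟨u, hu⟩ ⟨v, hv⟩
  exact exit_aux hk p hcu hcv

lemma confine_aux {s : Set (Fin 18)} (hS : ∀ v ∈ s, cp v ≠ 0) :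
    ∀ {a b : ↥s} (_p : (G.induce s).Walk a b), cp a.val = cp b.val := by
  intro a b p
  induction p with
  | nil => rfl
  | @cons u v w h p ih =>
    have hadj := induce_adj h
    rcases F1 _ _ hadj with h' | h' | h'
    · exact h'.trans ih
    · exact absurd h' (hS _ u.prop)
    · exact absurd h' (hS _ v.prop)

lemma confine {s : Set (Fin 18)} (hS : ∀ v ∈ s, cp v ≠ 0) (hc : (G.induce s).Connected)
    {u v : Fin 18} (hu : u ∈ s) (hv : v ∈ s) : cp u = cp v := by
  obtain ⟨p⟩ := hc.preconnected ⟨u, hu⟩ ⟨v, hv⟩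
  exact confine_aux hS p

def A : Set (Fin 18) := {v | isx v = true}
def B : Set (Fin 18) := {v | isx v = false}

lemma F10 : ∀ u v, G.Adj u v → (isx u = true ↔ isx v = false) := by decide

lemma hncard : B.ncard ≤ A.ncard := by
  have hA : A = ↑(Finset.univ.filter (fun v => isx v = true)) := by
    ext v; simp [A]
  have hB : B = ↑(Finset.univ.filter (fun v => isx v = false)) := by
    ext v; simp [B]
  rw [hA, hB, Set.ncard_coe_finset, Set.ncard_coe_finset]
  decide

lemma hBne : B.Nonempty := ⟨0, rfl⟩

lemma hdeg : ∀ a ∈ A, 4 ≤ (G.neighborSet a).ncard := by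
  intro a ha
  rw [Set.ncard_eq_toFinset_card']
  have : (G.neighborSet a).toFinset = G.neighborFinset a := rfl
  rw [this]
  revert ha
  have : ∀ a : Fin 18, isx a = true → 4 ≤ (G.neighborFinset a).card := by decide
  exact this a

lemma hbip :
    (∀ v, v ∈ A ∨ v ∈ B) ∧ (∀ v, ¬(v ∈ A ∧ v ∈ B)) ∧
      ∀ ⦃u v⦄, G.Adj u v → (u ∈ A ↔ v ∈ B) := by
  refine ⟨fun v => ?_, fun v => ?_, fun u v h => ?_⟩
  · by_cases h : isx v = true
    · exact Or.inl h
    · exact Or.inr (by simpa [B] using h)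
  · rintro ⟨h1, h2⟩
    simp [A, B] at h1 h2
    rw [h1] at h2; exact Bool.noConfusion h2
  · exact F10 u v h


theorem noK5 : ¬ HasCliqueMinor G 5 := by
  classical
  rintro ⟨f, hne, hconn, hdisj, hadj⟩
  have hdis : ∀ {i j : Fin 5}, i ≠ j → ∀ {v}, v ∈ f i → v ∈ f j → False := by
    intro i j hij v hvi hvj
    exact Set.disjoint_left.mp (hdisj hij) hvi hvj
  set T : Finset (Fin 5) := Finset.univ.filter (fun i => ∀ v ∈ f i, cp v ≠ 0) with hT
  have hmemT : ∀ i, i ∈ T ↔ ∀ v ∈ f i, cp v ≠ 0 := by intro i; simp [hT]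
  -- choose an S-vertex in every meeter
  obtain ⟨σ, hσ⟩ := choose_on Tᶜ (fun i v => v ∈ f i ∧ cp v = 0) (by
    intro i hi
    have hi' := Finset.mem_compl.mp hi
    rw [hmemT] at hi'
    push_neg at hi'
    obtain ⟨v, hv, h0⟩ := hi'
    exact ⟨v, hv, h0⟩)
  have hσ' : ∀ i, i ∉ T → σ i ∈ f i ∧ cp (σ i) = 0 := fun i hi => hσ i (Finset.mem_compl.mpr hi)
  -- at least two avoiders
  have hTcard2 : 2 ≤ T.card := by
    have hle : Tᶜ.card ≤ ({(0 : Fin 18), 1, 2} : Finset (Fin 18)).card := by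
      apply Finset.card_le_card_of_injOn σ
      · intro i hi
        rcases (F8 _).mp (hσ i hi).2 with h | h | h <;> simp [h]
      · intro i hi j hj hij2
        by_contra hne'
        exact hdis hne' (hσ i hi).1 (by rw [hij2]; exact (hσ j hj).1)
    have h3 := card3 (0 : Fin 18) 1 2
    have hcompl : Tᶜ.card = 5 - T.card := by
      rw [Finset.card_compl]; simp
    have hT5 : T.card ≤ 5 := le_trans (Finset.card_le_univ T) (by simp)
    omega
  obtain ⟨d1, hd1, d2, hd2, hd12⟩ := Finset.one_lt_card.mp (by omega : 1 < T.card)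
  obtain ⟨v1, hv1⟩ := hne d1
  set k : Fin 4 := cp v1 with hkdef
  have hk : k ≠ 0 := (hmemT d1).mp hd1 v1 hv1
  -- all avoiders live in copy k
  have hcopy : ∀ i ∈ T, ∀ v ∈ f i, cp v = k := by
    intro i hi v hv
    by_cases hid : i = d1
    · subst hid; exact confine ((hmemT i).mp hi) (hconn i) hv hv1
    · obtain ⟨u, hu, w, hw, hadj'⟩ := hadj i d1 hid
      have h1 : cp u = cp v := confine ((hmemT i).mp hi) (hconn i) hu hv
      have h2 : cp w = k := confine ((hmemT d1).mp hd1) (hconn d1) hw hv1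
      rcases F1 _ _ hadj' with h' | h' | h'
      · rw [← h1, h', h2]
      · exact absurd h' ((hmemT i).mp hi u hu)
      · exact absurd h' ((hmemT d1).mp hd1 w hw)
  -- no avoider is pure-y: each avoider contains an x-vertex of copy k
  have hxex : ∀ i ∈ T, ∃ v, v ∈ f i ∧ cp v = k ∧ isx v = true := by
    intro i hi
    by_contra hno
    push_neg at hno
    have hother : ∀ j ∈ ({i}ᶜ : Finset (Fin 5)), ∃ u, u ∈ f j ∧ cp u = k ∧ isx u = true := by
      intro j hj
      have hji : j ≠ i := by simpa using hj
      obtain ⟨u, hu, w, hw, ha⟩ := hadj j i hji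
      have hwk : cp w = k := hcopy i hi w hw
      have hwx : isx w = false := by
        have hnt := hno w hw hwk
        cases hxw : isx w
        · rfl
        · exact absurd hxw hnt
      have h3 := F3 u w ha (by rw [hwk]; exact hk) hwx
      exact ⟨u, hu, h3.1.trans hwk, h3.2⟩
    obtain ⟨g, hg⟩ := choose_on ({i}ᶜ : Finset (Fin 5)) _ hother
    have hle : ({i}ᶜ : Finset (Fin 5)).card ≤ ({xs k 0, xs k 1, xs k 2} : Finset (Fin 18)).card := by
      apply Finset.card_le_card_of_injOn g
      · intro j hj
        rcases (F4 k hk _).mp ⟨(hg j hj).2.1, (hg j hj).2.2⟩ with h | h | h <;> simp [h]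
      · intro a ha b hb hab
        by_contra hne'
        exact hdis hne' (hg a ha).1 (by rw [hab]; exact (hg b hb).1)
    have hcc : ({i}ᶜ : Finset (Fin 5)).card = 4 := by
      rw [Finset.card_compl]; simp
    have := card3 (xs k 0) (xs k 1) (xs k 2)
    omega
  -- choose x-vertices for avoiders
  obtain ⟨ξ, hξ⟩ := choose_on T (fun i v => v ∈ f i ∧ cp v = k ∧ isx v = true) hxex
  -- at most three avoiders
  have hT3 : T.card ≤ 3 := by
    have hle : T.card ≤ ({xs k 0, xs k 1, xs k 2} : Finset (Fin 18)).card := by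
      apply Finset.card_le_card_of_injOn ξ
      · intro j hj
        rcases (F4 k hk _).mp ⟨(hξ j hj).2.1, (hξ j hj).2.2⟩ with h | h | h <;> simp [h]
      · intro a ha b hb hab
        by_contra hne'
        exact hdis hne' (hξ a ha).1 (by rw [hab]; exact (hξ b hb).1)
    have := card3 (xs k 0) (xs k 1) (xs k 2)
    omega
  have hξx : ∀ i ∈ T, ξ i = xs k 0 ∨ ξ i = xs k 1 ∨ ξ i = xs k 2 := by
    intro i hi
    exact (F4 k hk _).mp ⟨(hξ i hi).2.1, (hξ i hi).2.2⟩
  rcases (by omega : T.card = 2 ∨ T.card = 3) with C2 | C3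
  · -- two avoiders, three meeters
    obtain ⟨e1, e2, he12, hTeq⟩ := Finset.card_eq_two.mp C2
    have he1T : e1 ∈ T := by rw [hTeq]; simp
    have he2T : e2 ∈ T := by rw [hTeq]; simp
    have hTccard : Tᶜ.card = 3 := by
      rw [Finset.card_compl]; simp [C2]
    obtain ⟨n1, n2, n3, hn12, hn13, hn23, hTceq⟩ := Finset.card_eq_three.mp hTccard
    have hn1 : n1 ∉ T := Finset.mem_compl.mp (by rw [hTceq]; simp)
    have hn2 : n2 ∉ T := Finset.mem_compl.mp (by rw [hTceq]; simp)
    have hn3 : n3 ∉ T := Finset.mem_compl.mp (by rw [hTceq]; simp)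
    -- the three chosen S-vertices cover all of S
    have hcov : ∀ w, cp w = 0 → ∃ m, m ∉ T ∧ σ m = w := by
      intro w hw
      have hp := perm3' (0 : Fin 18) 1 2 (σ n1) (σ n2) (σ n3)
        (by intro h; exact hdis hn12 (hσ' n1 hn1).1 (by rw [h]; exact (hσ' n2 hn2).1))
        (by intro h; exact hdis hn13 (hσ' n1 hn1).1 (by rw [h]; exact (hσ' n3 hn3).1))
        (by intro h; exact hdis hn23 (hσ' n2 hn2).1 (by rw [h]; exact (hσ' n3 hn3).1))
        ((F8 _).mp (hσ' n1 hn1).2) ((F8 _).mp (hσ' n2 hn2).2) ((F8 _).mp (hσ' n3 hn3).2)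
        (fun w' => ∃ m, m ∉ T ∧ σ m = w')
        ⟨n1, hn1, rfl⟩ ⟨n2, hn2, rfl⟩ ⟨n3, hn3, rfl⟩
      rcases (F8 _).mp hw with h | h | h
      · exact h ▸ hp.1
      · exact h ▸ hp.2.1
      · exact h ▸ hp.2.2
    -- each meeter owns exactly one S-vertex
    have hone : ∀ m, m ∉ T → ∀ v ∈ f m, cp v = 0 → v = σ m := by
      intro m hm v hv h0
      obtain ⟨m', hm', hσm'⟩ := hcov v h0
      by_cases hmm : m = m'
      · rw [hmm]; exact hσm'.symm
      · exact (hdis hmm hv (hσm' ▸ (hσ' m' hm').1)).elim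
    -- indices of the avoiders' x-vertices
    obtain ⟨j1, hj1⟩ : ∃ j1, ξ e1 = xs k j1 := by
      rcases hξx e1 he1T with h | h | h
      exacts [⟨0, h⟩, ⟨1, h⟩, ⟨2, h⟩]
    obtain ⟨j2, hj2⟩ : ∃ j2, ξ e2 = xs k j2 := by
      rcases hξx e2 he2T with h | h | h
      exacts [⟨0, h⟩, ⟨1, h⟩, ⟨2, h⟩]
    have hj12 : j1 ≠ j2 := by
      rintro rfl
      exact hdis he12 (hξ e1 he1T).1 (by rw [hj1, ← hj2]; exact (hξ e2 he2T).1)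
    obtain ⟨j3, hj31, hj32, hjall⟩ := FJ j1 j2 hj12
    have hx1 : xs k j1 ∈ f e1 := hj1 ▸ (hξ e1 he1T).1
    have hx2 : xs k j2 ∈ f e2 := hj2 ▸ (hξ e2 he2T).1
    by_cases hall : ∀ j : Fin 3, xs k j ∈ f e1 ∨ xs k j ∈ f e2
    · -- all x-vertices are inside the two avoiders
      have hexh2 : ∀ w, cp w = k → isx w = true → w ∈ f e1 ∨ w ∈ f e2 := by
        intro w h1 h2
        rcases (F4 k hk w).mp ⟨h1, h2⟩ with h | h | h
        · exact h ▸ hall 0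
        · exact h ▸ hall 1
        · exact h ▸ hall 2
      have hCk2 : ∀ m, m ∉ T → ∀ v ∈ f m, cp v ≠ k := by
        intro m hm v hv hvk
        obtain ⟨hσm, hσ0⟩ := hσ' m hm
        obtain ⟨w, hw, hwk, hwx⟩ := exit hk (hconn m) hv hσm hvk (by rw [hσ0]; exact (Ne.symm hk))
        rcases hexh2 w hwk hwx with h | h
        · exact hdis (show m ≠ e1 by rintro rfl; exact hm he1T) hw h
        · exact hdis (show m ≠ e2 by rintro rfl; exact hm he2T) hw h
      -- one of the avoiders owns exactly one x-vertex; kill it with its bad s-vertex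
      have hkill : ∀ e, e ∈ T → ∀ j : Fin 3, (∀ v ∈ f e, cp v = k → isx v = true → v = xs k j) → False := by
        intro e heT j hsingle
        obtain ⟨m, hm, hσm⟩ := hcov (bad k j) (F6 k hk j).1
        obtain ⟨u, hu, v, hv, ha⟩ := hadj m e (by rintro rfl; exact hm heT)
        have hvk : cp v = k := hcopy e heT v hv
        have hu0 : cp u = 0 := by
          rcases F1 _ _ ha with h | h | h
          · exact absurd (h.trans hvk) (hCk2 m hm u hu)
          · exact h
          · exact absurd h (by rw [hvk]; exact hk)
        have hvx := F2 v u ha.symm (by rw [hvk]; exact hk) hu0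
        have huσ : u = σ m := hone m hm u hu hu0
        have hveq : v = xs k j := hsingle v hv hvk hvx
        rw [huσ, hσm, hveq] at ha
        exact (F6 k hk j).2 ha
      rcases hall j3 with hj3 | hj3
      · -- xs k j3 ∈ f e1, so f e2 ∩ X = {xs k j2}
        apply hkill e2 he2T j2
        intro v hv h1 h2
        rcases (F4 k hk v).mp ⟨h1, h2⟩ with h | h | h <;> rw [h] <;> rw [h] at hv
        · -- v = xs k 0
          rcases hjall 0 with hj | hj | hj
          · exact absurd hv (fun hmem => hdis he12 hx1 (hj ▸ hmem))
          · exact hj ▸ rfl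
          · exact absurd hv (fun hmem => hdis he12 (hj ▸ hj3) hmem)
        · rcases hjall 1 with hj | hj | hj
          · exact absurd hv (fun hmem => hdis he12 hx1 (hj ▸ hmem))
          · exact hj ▸ rfl
          · exact absurd hv (fun hmem => hdis he12 (hj ▸ hj3) hmem)
        · rcases hjall 2 with hj | hj | hj
          · exact absurd hv (fun hmem => hdis he12 hx1 (hj ▸ hmem))
          · exact hj ▸ rfl
          · exact absurd hv (fun hmem => hdis he12 (hj ▸ hj3) hmem)
      · -- xs k j3 ∈ f e2, so f e1 ∩ X = {xs k j1}
        apply hkill e1 he1T j1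
        intro v hv h1 h2
        rcases (F4 k hk v).mp ⟨h1, h2⟩ with h | h | h <;> rw [h] <;> rw [h] at hv
        · rcases hjall 0 with hj | hj | hj
          · exact hj ▸ rfl
          · exact absurd hv (fun hmem => hdis he12 hmem (hj ▸ hx2))
          · exact absurd hv (fun hmem => hdis he12 hmem (hj ▸ hj3))
        · rcases hjall 1 with hj | hj | hj
          · exact hj ▸ rfl
          · exact absurd hv (fun hmem => hdis he12 hmem (hj ▸ hx2))
          · exact absurd hv (fun hmem => hdis he12 hmem (hj ▸ hj3))
        · rcases hjall 2 with hj | hj | hj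
          · exact hj ▸ rfl
          · exact absurd hv (fun hmem => hdis he12 hmem (hj ▸ hx2))
          · exact absurd hv (fun hmem => hdis he12 hmem (hj ▸ hj3))
    · -- some x-vertex is free
      push_neg at hall
      obtain ⟨jw, hw1, hw2⟩ := hall
      have hjw1 : jw ≠ j1 := by rintro rfl; exact hw1 hx1
      have hjw2 : jw ≠ j2 := by rintro rfl; exact hw2 hx2
      -- the meeter owning bad k j has a C_k vertex, hence owns the free x-vertex
      have hgrab : ∀ (e : Fin 5) (j : Fin 3), e ∈ T → (∀ v ∈ f e, cp v = k → isx v = true → v = xs k j) →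
          ∃ m, m ∉ T ∧ σ m = bad k j ∧ xs k jw ∈ f m := by
        intro e j heT hsingle
        obtain ⟨m, hm, hσm⟩ := hcov (bad k j) (F6 k hk j).1
        refine ⟨m, hm, hσm, ?_⟩
        obtain ⟨u, hu, v, hv, ha⟩ := hadj m e (by rintro rfl; exact hm heT)
        have hvk : cp v = k := hcopy e heT v hv
        have hcu : cp u = k ∨ cp u = 0 := by
          rcases F1 _ _ ha with h | h | h
          · exact Or.inl (h.trans hvk)
          · exact Or.inr h
          · exact absurd h (by rw [hvk]; exact hk)
        rcases hcu with hcu | hcu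
        · -- u is in C_k: exit lemma gives an x-vertex of copy k in f m
          obtain ⟨hσm', hσ0⟩ := hσ' m hm
          obtain ⟨w, hw, hwk, hwx⟩ := exit hk (hconn m) hu hσm' hcu (by rw [hσ0]; exact (Ne.symm hk))
          have hjw3 : jw = j3 := by
            rcases hjall jw with hj | hj | hj
            · exact absurd hj hjw1
            · exact absurd hj hjw2
            · exact hj
          rcases (F4 k hk w).mp ⟨hwk, hwx⟩ with h | h | h <;> rw [h] at hw <;>
            [rcases hjall 0 with hj | hj | hj; rcases hjall 1 with hj | hj | hj;
             rcases hjall 2 with hj | hj | hj] <;>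
            first
              | exact absurd hw (fun hmem => hdis (show m ≠ e1 by rintro rfl; exact hm he1T) hmem (hj ▸ hx1))
              | exact absurd hw (fun hmem => hdis (show m ≠ e2 by rintro rfl; exact hm he2T) hmem (hj ▸ hx2))
              | (rw [hjw3, ← hj]; exact hw)
        · -- u is an S-vertex, so u = bad k j, adjacent to xs k j: contradiction
          have hvx := F2 v u ha.symm (by rw [hvk]; exact hk) hcu
          have huσ : u = σ m := hone m hm u hu hcu
          have hveq : v = xs k j := hsingle v hv hvk hvx
          rw [huσ, hσm, hveq] at ha
          exact absurd ha (F6 k hk j).2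
      have hjw3 : jw = j3 := by
        rcases hjall jw with hj | hj | hj
        · exact absurd hj hjw1
        · exact absurd hj hjw2
        · exact hj
      have hsingle1 : ∀ v ∈ f e1, cp v = k → isx v = true → v = xs k j1 := by
        intro v hv h1 h2
        rcases (F4 k hk v).mp ⟨h1, h2⟩ with h | h | h <;> rw [h] <;> rw [h] at hv <;>
          [rcases hjall 0 with hj | hj | hj; rcases hjall 1 with hj | hj | hj;
           rcases hjall 2 with hj | hj | hj] <;>
          first
            | exact hj ▸ rfl
            | exact absurd hv (fun hmem => hdis he12 hmem (hj ▸ hx2))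
            | exact absurd hv (by rw [hj, ← hjw3]; exact hw1)
      have hsingle2 : ∀ v ∈ f e2, cp v = k → isx v = true → v = xs k j2 := by
        intro v hv h1 h2
        rcases (F4 k hk v).mp ⟨h1, h2⟩ with h | h | h <;> rw [h] <;> rw [h] at hv <;>
          [rcases hjall 0 with hj | hj | hj; rcases hjall 1 with hj | hj | hj;
           rcases hjall 2 with hj | hj | hj] <;>
          first
            | exact hj ▸ rfl
            | exact absurd hv (fun hmem => hdis he12.symm hmem (hj ▸ hx1))
            | exact absurd hv (by rw [hj, ← hjw3]; exact hw2)
      obtain ⟨ma, hma, hσma, hwma⟩ := hgrab e1 j1 he1T hsingle1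
      obtain ⟨mb, hmb, hσmb, hwmb⟩ := hgrab e2 j2 he2T hsingle2
      have hmab : ma ≠ mb := by
        rintro rfl
        exact F7 k hk j1 j2 hj12 (hσma.symm.trans hσmb)
      exact hdis hmab hwma hwmb
  · -- three avoiders, two meeters
    obtain ⟨a, b, c, hab, hac, hbc, hTeq⟩ := Finset.card_eq_three.mp C3
    have haT : a ∈ T := by rw [hTeq]; simp
    have hbT : b ∈ T := by rw [hTeq]; simp
    have hcT : c ∈ T := by rw [hTeq]; simp
    have hTccard : Tᶜ.card = 2 := by
      rw [Finset.card_compl]; simp [C3]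
    obtain ⟨m1, m2, hm12, hTceq⟩ := Finset.card_eq_two.mp hTccard
    have hm1 : m1 ∉ T := Finset.mem_compl.mp (by rw [hTceq]; simp)
    have hm2 : m2 ∉ T := Finset.mem_compl.mp (by rw [hTceq]; simp)
    -- x-vertices of copy k are exhausted by the three avoiders
    have hexh : ∀ w, cp w = k → isx w = true → ∃ i, i ∈ T ∧ w ∈ f i := by
      intro w h1 h2
      have hp := perm3' (xs k 0) (xs k 1) (xs k 2) (ξ a) (ξ b) (ξ c)
        (by intro h; exact hdis hab (hξ a haT).1 (by rw [h]; exact (hξ b hbT).1))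
        (by intro h; exact hdis hac (hξ a haT).1 (by rw [h]; exact (hξ c hcT).1))
        (by intro h; exact hdis hbc (hξ b hbT).1 (by rw [h]; exact (hξ c hcT).1))
        (hξx a haT) (hξx b hbT) (hξx c hcT)
        (fun w' => ∃ i, i ∈ T ∧ w' ∈ f i)
        ⟨a, haT, (hξ a haT).1⟩ ⟨b, hbT, (hξ b hbT).1⟩ ⟨c, hcT, (hξ c hcT).1⟩
      rcases (F4 k hk w).mp ⟨h1, h2⟩ with h | h | h
      · exact h ▸ hp.1
      · exact h ▸ hp.2.1
      · exact h ▸ hp.2.2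
    -- meeters have no vertex in copy k
    have hCk : ∀ m, m ∉ T → ∀ v ∈ f m, cp v ≠ k := by
      intro m hm v hv hvk
      obtain ⟨hσm, hσ0⟩ := hσ' m hm
      obtain ⟨w, hw, hwk, hwx⟩ := exit hk (hconn m) hv hσm hvk (by rw [hσ0]; exact (Ne.symm hk))
      obtain ⟨i, hiT, hwin⟩ := hexh w hwk hwx
      exact hdis (show m ≠ i by rintro rfl; exact hm hiT) hw hwin
    -- each meeter contains two distinct S-vertices
    have htwoS : ∀ m, m ∉ T → ∃ s1 s2, s1 ∈ f m ∧ s2 ∈ f m ∧ cp s1 = 0 ∧ cp s2 = 0 ∧ s1 ≠ s2 := by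
      intro m hm
      have hport : ∀ i, i ∈ T → ∃ u v, u ∈ f m ∧ cp u = 0 ∧ v ∈ f i ∧ cp v = k ∧ isx v = true ∧ G.Adj u v := by
        intro i hiT
        obtain ⟨u, hu, v, hv, ha⟩ := hadj m i (by rintro rfl; exact hm hiT)
        have hvk : cp v = k := hcopy i hiT v hv
        have hu0 : cp u = 0 := by
          rcases F1 _ _ ha with h | h | h
          · exact absurd (h.trans hvk) (hCk m hm u hu)
          · exact h
          · exact absurd h (by rw [hvk]; exact hk)
        have hvx := F2 v u ha.symm (by rw [hvk]; exact hk) hu0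
        exact ⟨u, v, hu, hu0, hv, hvk, hvx, ha⟩
      obtain ⟨ua, va, hua, hua0, hva, hvak, hvax, haa⟩ := hport a haT
      obtain ⟨ub, vb, hub, hub0, hvb, hvbk, hvbx, hba⟩ := hport b hbT
      obtain ⟨uc, vc, huc, huc0, hvc, hvck, hvcx, hca⟩ := hport c hcT
      by_cases h1 : ua = ub
      · by_cases h2 : ua = uc
        · -- all three ports equal: one S-vertex adjacent to all of X_k
          exfalso
          have hp := perm3' (xs k 0) (xs k 1) (xs k 2) va vb vc
            (by intro h; exact hdis hab hva (by rw [h]; exact hvb))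
            (by intro h; exact hdis hac hva (by rw [h]; exact hvc))
            (by intro h; exact hdis hbc hvb (by rw [h]; exact hvc))
            ((F4 k hk va).mp ⟨hvak, hvax⟩) ((F4 k hk vb).mp ⟨hvbk, hvbx⟩)
            ((F4 k hk vc).mp ⟨hvck, hvcx⟩)
            (fun w => G.Adj ua w)
            haa (by rw [h1]; exact hba) (by rw [h2]; exact hca)
          exact F5 k hk ua hua0 ⟨hp.1, hp.2.1, hp.2.2⟩
        · exact ⟨ua, uc, hua, huc, hua0, huc0, h2⟩
      · exact ⟨ua, ub, hua, hub, hua0, hub0, h1⟩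
    obtain ⟨s1, s2, hs11, hs12, hc11, hc12, hne1⟩ := htwoS m1 hm1
    obtain ⟨t1, t2, ht11, ht12, hd11, hd12, hne2⟩ := htwoS m2 hm2
    exact pigeon4' (0 : Fin 18) 1 2 s1 s2 t1 t2
      hne1
      (fun h => hdis hm12 hs11 (h ▸ ht11))
      (fun h => hdis hm12 hs11 (h ▸ ht12))
      (fun h => hdis hm12 hs12 (h ▸ ht11))
      (fun h => hdis hm12 hs12 (h ▸ ht12))
      hne2
      ((F8 _).mp hc11) ((F8 _).mp hc12) ((F8 _).mp hd11) ((F8 _).mp hd12)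

end T

/-- There is a bipartite graph `G` with bipartition `(A,B)`, `|A| ≥ |B| > 0`,
in which every vertex of `A` has degree at least four, with no `K_5` minor. -/


theorem exists_bipartite_minDegFour_noK5Minor :
    ∃ (n : ℕ) (G : SimpleGraph (Fin n)) (A B : Set (Fin n)),
      IsBipartitionWith G A B ∧ B.ncard ≤ A.ncard ∧ B.Nonempty ∧
        (∀ a ∈ A, 4 ≤ (G.neighborSet a).ncard) ∧ ¬ HasCliqueMinor G 5 := by
  exact ⟨18, T.G, T.A, T.B, T.hbip, T.hncard, T.hBne, T.hdeg, T.noK5⟩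
end

section
/- There exists a bipartite graph G with bipartition (A,B), with |A| ≥ |B| > 0, in which every vertex of A has degree at least five, such that G has no K_6 minor. Hence the hypothesis 'degree at least six' in the main theorem cannot be weakened to 'degree at least five'. -/
open SimpleGraph Function

/-!
Deleting the branch set containing the apex `z` from a `K₆` model leaves a `K₅` model avoiding
`z`. Its branch sets avoiding the shared vertices `y t` are connected inside single copies, and
being pairwise adjacent they all lie in one copy `c`; each contains some `x c i` (were one a lone
`w c s`, the other four would each need one of the three `x c i`). So all five disjoint branch sets
meet the six vertices `x c i`, `y i`, and two of them meet these exactly in `{x c i}` and `{y i}` for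
one `i`. These two are not adjacent: the first lies in copy `c` with `x c i` as its only `x`, the
second contains no `x c j`, hence no `w c s`, and `x c i` is not adjacent to `y i`.
-/

section

variable {V W κ κ' : Type*} {G : SimpleGraph V} {H : SimpleGraph W}

structure IsCliqueModel (G : SimpleGraph V) (f : κ → Set V) : Prop where
  nonempty : ∀ i, (f i).Nonempty
  connected : ∀ i, (G.induce (f i)).Connected
  pairwise_disjoint : Pairwise (Disjoint on f)
  exists_adj : ∀ i j, i ≠ j → ∃ u ∈ f i, ∃ v ∈ f j, G.Adj u v

theorem hasCliqueMinor_iff {t : ℕ} :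
    HasCliqueMinor G t ↔ ∃ f : Fin t → Set V, IsCliqueModel G f :=
  ⟨fun ⟨f, h₁, h₂, h₃, h₄⟩ => ⟨f, h₁, h₂, h₃, h₄⟩,
    fun ⟨f, h₁, h₂, h₃, h₄⟩ => ⟨f, h₁, h₂, h₃, h₄⟩⟩

theorem IsCliqueModel.comp {f : κ → Set V} (hf : IsCliqueModel G f) {e : κ' → κ}
    (he : Injective e) : IsCliqueModel G (f ∘ e) where
  nonempty i := hf.nonempty (e i)
  connected i := hf.connected (e i)
  pairwise_disjoint _ _ hij := hf.pairwise_disjoint (he.ne hij)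
  exists_adj _ _ hij := hf.exists_adj _ _ (he.ne hij)

theorem IsCliqueModel.image {f : κ → Set V} (hf : IsCliqueModel G f) (φ : G →g H)
    (hφ : Injective φ) : IsCliqueModel H (fun i => φ '' f i) where
  nonempty i := (hf.nonempty i).image φ
  connected i := by
    let ψ : G.induce (f i) →g H.induce (φ '' f i) :=
      ⟨fun v => ⟨φ v, Set.mem_image_of_mem φ v.2⟩, fun h => φ.map_adj h⟩
    refine (hf.connected i).map ψ ?_
    rintro ⟨_, v, hv, rfl⟩
    exact ⟨⟨v, hv⟩, rfl⟩
  pairwise_disjoint _ _ hij := (Set.disjoint_image_iff hφ).mpr (hf.pairwise_disjoint hij)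
  exists_adj i j hij := by
    obtain ⟨u, hu, v, hv, huv⟩ := hf.exists_adj i j hij
    exact ⟨φ u, Set.mem_image_of_mem φ hu, φ v, Set.mem_image_of_mem φ hv, φ.map_adj huv⟩

theorem HasCliqueMinor.map {t : ℕ} (h : HasCliqueMinor G t) (φ : G →g H) (hφ : Injective φ) :
    HasCliqueMinor H t := by
  obtain ⟨f, hf⟩ := hasCliqueMinor_iff.mp h
  exact hasCliqueMinor_iff.mpr ⟨_, hf.image φ hφ⟩

theorem IsCliqueModel.exists_forall_notMem {t : ℕ} {f : Fin (t + 1) → Set V}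
    (hf : IsCliqueModel G f) (z : V) :
    ∃ g : Fin t → Set V, IsCliqueModel G g ∧ ∀ i, z ∉ g i := by
  obtain ⟨i₀, hi₀⟩ : ∃ i₀, ∀ j, j ≠ i₀ → z ∉ f j := by
    by_cases hz : ∃ i, z ∈ f i
    · obtain ⟨i₀, hi₀⟩ := hz
      exact ⟨i₀, fun j hj hzj => Set.disjoint_left.mp (hf.pairwise_disjoint hj) hzj hi₀⟩
    · exact ⟨0, fun j _ hzj => hz ⟨j, hzj⟩⟩
  exact ⟨f ∘ i₀.succAbove, hf.comp Fin.succAbove_right_injective,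
    fun i => hi₀ _ (Fin.succAbove_ne i₀ i)⟩

theorem card_le_of_pairwise_disjoint {α β : Type*} [Fintype β] {f : κ → Set α}
    (hf : Pairwise (Disjoint on f)) {s : Finset κ} (φ : β → α) (h : ∀ j ∈ s, ∃ b, φ b ∈ f j) :
    s.card ≤ Fintype.card β := by
  choose b hb using h
  rw [← Fintype.card_coe]
  refine Fintype.card_le_of_injective (fun j : s => b j j.2) fun j j' hjj' => ?_
  by_contra hne
  exact Set.disjoint_left.mp (hf (Subtype.coe_ne_coe.mpr hne)) (hb j j.2)
    ((congrArg φ hjj').symm ▸ hb j' j'.2)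

theorem IsBipartitionWith.comap {A B : Set V} (h : IsBipartitionWith G A B) (φ : H →g G) :
    IsBipartitionWith H (φ ⁻¹' A) (φ ⁻¹' B) :=
  ⟨fun v => h.1 (φ v), fun v => h.2.1 (φ v), fun _ _ huv => h.2.2 (φ.map_adj huv)⟩

end

namespace SimpleGraph

variable {V β : Type*} {G : SimpleGraph V} {S : Set V} {u v : V}

theorem Preconnected.apply_eq_of_induce (hS : (G.induce S).Preconnected) (φ : V → β)
    (hφ : ∀ u ∈ S, ∀ v ∈ S, G.Adj u v → φ u = φ v) (hu : u ∈ S) (hv : v ∈ S) : φ u = φ v := by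
  suffices ∀ a b : S, Relation.ReflTransGen (G.induce S).Adj a b → φ a = φ b from
    this ⟨u, hu⟩ ⟨v, hv⟩ ((reachable_iff_reflTransGen _ _).mp (hS _ _))
  intro a b hab
  induction hab with
  | refl => rfl
  | tail _ hadj ih => exact ih.trans (hφ _ (Subtype.prop _) _ (Subtype.prop _) hadj)

theorem Preconnected.exists_adj_of_induce (hS : (G.induce S).Preconnected) (hu : u ∈ S)
    (hv : v ∈ S) (huv : u ≠ v) : ∃ w ∈ S, G.Adj u w := by
  obtain ⟨p⟩ := hS ⟨u, hu⟩ ⟨v, hv⟩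
  exact ⟨p.snd, p.snd.2, p.adj_snd (p.not_nil_of_ne (Subtype.coe_ne_coe.mp huv))⟩

end SimpleGraph

/-- Since `∑ j, #(g j) ≤ 2 * card κ`, more than `card κ` of the `g j` are singletons, and two of
them share their `κ`-coordinate. -/
theorem exists_eq_singleton_pair {ι κ : Type*} [Fintype ι] [Fintype κ]
    {g : ι → Finset (κ × Bool)} (hne : ∀ j, (g j).Nonempty) (hg : Pairwise (Disjoint on g))
    (hcard : 3 * Fintype.card κ < 2 * Fintype.card ι) :
    ∃ k a b, g a = {(k, false)} ∧ g b = {(k, true)} := by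
  classical
  set S := Finset.univ.filter fun j => (g j).card = 1
  have hsum : ∑ j, (g j).card ≤ 2 * Fintype.card κ := by
    rw [← Finset.card_biUnion fun j _ j' _ h => hg h]
    simpa [mul_comm] using Finset.card_le_univ (Finset.univ.biUnion g)
  have hS : 2 * Fintype.card ι ≤ ∑ j, (g j).card + S.card := by
    rw [Finset.card_filter, ← Finset.sum_add_distrib, ← Finset.card_univ, mul_comm,
      ← smul_eq_mul, ← Finset.sum_const]
    refine Finset.sum_le_sum fun j _ => ?_
    have := (hne j).card_pos
    split_ifs <;> omega
  choose p hp using hne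
  have hpS : ∀ j ∈ S, g j = {p j} := fun j hj =>
    Finset.eq_singleton_iff_unique_mem.mpr
      ⟨hp j, fun q hq => Finset.card_le_one.mp (Finset.mem_filter.mp hj).2.le q hq _ (hp j)⟩
  obtain ⟨a, ha, b, hb, hab, hk⟩ := Finset.exists_ne_map_eq_of_card_lt_of_maps_to
    (s := S) (t := Finset.univ) (by rw [Finset.card_univ]; omega) (f := fun j => (p j).1)
    fun _ _ => Finset.mem_univ _
  have hpab : p a ≠ p b := fun h => Finset.disjoint_left.mp (hg hab) (hp a) (h ▸ hp b)
  cases h₁ : (p a).2 <;> cases h₂ : (p b).2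
  · exact absurd (Prod.ext hk (h₁.trans h₂.symm)) hpab
  · exact ⟨(p a).1, a, b, by rw [hpS a ha, ← h₁], by rw [hpS b hb, hk, ← h₂]⟩
  · exact ⟨(p a).1, b, a, by rw [hpS b hb, hk, ← h₂], by rw [hpS a ha, ← h₁]⟩
  · exact absurd (Prod.ext hk (h₁.trans h₂.symm)) hpab

namespace GluedGraph

/-- Copy `c` of `K_{3,5}` minus a matching of three edges has parts `{x c i}` and
`{y t} ∪ {w c s}`, the missing matching being `x c i – y i`; all copies share the `y t`, and `z` is
the apex joined to every `x c i`. -/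
inductive Vertex (ι : Type*) where
  | x (c : ι) (i : Fin 3)
  | y (t : Fin 3)
  | w (c : ι) (s : Fin 2)
  | z
  deriving DecidableEq, Fintype

open Vertex

variable {ι : Type*}

def Rel : Vertex ι → Vertex ι → Prop
  | x _ i, y t => i ≠ t
  | x c _, w c' _ => c = c'
  | x _ _, z => True
  | _, _ => False

def graph (ι : Type*) : SimpleGraph (Vertex ι) := SimpleGraph.fromRel Rel

def Vertex.copy : Vertex ι → Option ι
  | x c _ => some c
  | w c _ => some c
  | _ => none

theorem Vertex.copy_eq_some_iff {v : Vertex ι} {c : ι} :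
    v.copy = some c ↔ (∃ i, v = x c i) ∨ ∃ s, v = w c s := by
  cases v <;> simp [Vertex.copy, eq_comm]

theorem copy_eq_of_adj {u v : Vertex ι} (h : (graph ι).Adj u v) (hu : u.copy ≠ none)
    (hv : v.copy ≠ none) : u.copy = v.copy := by
  cases u <;> cases v <;> simp_all [graph, Rel, Vertex.copy, eq_comm]

theorem eq_x_of_adj_w {v : Vertex ι} {c : ι} {s : Fin 2} (h : (graph ι).Adj v (w c s)) :
    ∃ i, v = x c i := by
  cases v <;> simp_all [graph, Rel]

variable {S : Set (Vertex ι)}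

theorem copy_ne_none_of_mem (hz : z ∉ S) (hy : ∀ t, y t ∉ S) {v : Vertex ι}
    (hv : v ∈ S) : v.copy ≠ none := by
  cases v <;> simp_all [Vertex.copy]

theorem copy_eq_of_connected (hS : ((graph ι).induce S).Connected) (hz : z ∉ S)
    (hy : ∀ t, y t ∉ S) {u v : Vertex ι} (hu : u ∈ S) (hv : v ∈ S) : u.copy = v.copy :=
  hS.preconnected.apply_eq_of_induce _ (fun _ ha _ hb hab =>
    copy_eq_of_adj hab (copy_ne_none_of_mem hz hy ha) (copy_ne_none_of_mem hz hy hb)) hu hv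

theorem exists_x_mem_of_w_mem (hS : ((graph ι).induce S).Connected) {c : ι} {s : Fin 2}
    (hw : w c s ∈ S) {v : Vertex ι} (hv : v ∈ S) (hne : v ≠ w c s) : ∃ i, x c i ∈ S := by
  obtain ⟨u, hu, hadj⟩ := hS.preconnected.exists_adj_of_induce hw hv hne.symm
  obtain ⟨i, rfl⟩ := eq_x_of_adj_w hadj.symm
  exact ⟨i, hu⟩

def hub (c : ι) : Fin 3 × Bool → Vertex ι
  | (i, false) => x c i
  | (t, true) => y t

open Classical in
noncomputable def hubs (c : ι) (S : Set (Vertex ι)) : Finset (Fin 3 × Bool) :=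
  Finset.univ.filter fun p => hub c p ∈ S

theorem mem_hubs {c : ι} {p : Fin 3 × Bool} : p ∈ hubs c S ↔ hub c p ∈ S := by
  simp [hubs]

theorem not_adj_of_hubs_eq {A B : Set (Vertex ι)} (hA : ((graph ι).induce A).Connected)
    (hB : ((graph ι).induce B).Connected) (hzA : z ∉ A) (hzB : z ∉ B) {c : ι} {i : Fin 3}
    (hA' : hubs c A = {(i, false)}) (hB' : hubs c B = {(i, true)}) {u v : Vertex ι}
    (hu : u ∈ A) (hv : v ∈ B) : ¬ (graph ι).Adj u v := by
  have hxA : ∀ j, x c j ∈ A ↔ j = i := fun j => by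
    simpa [hA', hub] using (mem_hubs (S := A) (c := c) (p := (j, false))).symm
  have hyA : ∀ t, y t ∉ A := fun t h => by
    simpa [hA', hub] using (mem_hubs (S := A) (c := c) (p := (t, true))).mpr h
  have hxB : ∀ j, x c j ∉ B := fun j h => by
    simpa [hB', hub] using (mem_hubs (S := B) (c := c) (p := (j, false))).mpr h
  have hyB : ∀ t, y t ∈ B ↔ t = i := fun t => by
    simpa [hB', hub] using (mem_hubs (S := B) (c := c) (p := (t, true))).symm
  have hcopy : u.copy = some c := by
    rw [copy_eq_of_connected hA hzA hyA hu ((hxA i).mpr rfl)]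
    rfl
  intro huv
  rcases Vertex.copy_eq_some_iff.mp hcopy with ⟨j, rfl⟩ | ⟨s, rfl⟩
  · cases v with
    | x => simp [graph, Rel] at huv
    | y t => simp_all [graph, Rel]
    | w c' s =>
      obtain rfl : c = c' := by simpa [graph, Rel] using huv
      obtain ⟨k, hk⟩ := exists_x_mem_of_w_mem hB hv ((hyB i).mpr rfl) (by simp)
      exact hxB k hk
    | z => exact hzB hv
  · obtain ⟨j, rfl⟩ := eq_x_of_adj_w huv.symm
    exact hxB j hv

variable {κ : Type*} {f : κ → Set (Vertex ι)}

theorem exists_copy_of_isCliqueModel (hf : IsCliqueModel (graph ι) f) (hz : ∀ j, z ∉ f j)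
    {a₀ : κ} (ha₀ : ∀ t, y t ∉ f a₀) :
    ∃ c, ∀ j, (∀ t, y t ∉ f j) → ∀ v ∈ f j, v.copy = some c := by
  obtain ⟨v₀, hv₀⟩ := hf.nonempty a₀
  obtain ⟨c, hc⟩ := Option.ne_none_iff_exists'.mp (copy_ne_none_of_mem (hz a₀) ha₀ hv₀)
  refine ⟨c, fun j hj v hv => ?_⟩
  rcases eq_or_ne j a₀ with rfl | hja
  · rw [copy_eq_of_connected (hf.connected j) (hz j) hj hv hv₀, hc]
  obtain ⟨u, hu, u₀, hu₀, huu₀⟩ := hf.exists_adj j a₀ hja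
  rw [copy_eq_of_connected (hf.connected j) (hz j) hj hv hu,
    copy_eq_of_adj huu₀ (copy_ne_none_of_mem (hz j) hj hu) (copy_ne_none_of_mem (hz a₀) ha₀ hu₀),
    copy_eq_of_connected (hf.connected a₀) (hz a₀) ha₀ hu₀ hv₀, hc]

variable [Fintype κ]

theorem exists_x_mem_of_isCliqueModel (hf : IsCliqueModel (graph ι) f)
    (hκ : 5 ≤ Fintype.card κ) {a : κ} {c : ι} (hc : ∀ v ∈ f a, v.copy = some c) :
    ∃ i, x c i ∈ f a := by
  classical
  by_contra! hx
  obtain ⟨v₀, hv₀⟩ := hf.nonempty a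
  obtain ⟨s, rfl⟩ : ∃ s, v₀ = w c s :=
    (Vertex.copy_eq_some_iff.mp (hc v₀ hv₀)).resolve_left fun ⟨i, hi⟩ => hx i (hi ▸ hv₀)
  have hsingle : ∀ v ∈ f a, v = w c s := fun v hv => by
    by_contra hne
    obtain ⟨i, hi⟩ := exists_x_mem_of_w_mem (hf.connected a) hv₀ hv hne
    exact hx i hi
  have hothers : ∀ j ∈ Finset.univ.erase a, ∃ i, x c i ∈ f j := fun j hj => by
    obtain ⟨u, hu, v, hv, huv⟩ := hf.exists_adj j a (Finset.ne_of_mem_erase hj)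
    obtain ⟨i, rfl⟩ := eq_x_of_adj_w (hsingle v hv ▸ huv)
    exact ⟨i, hu⟩
  have := card_le_of_pairwise_disjoint hf.pairwise_disjoint (x c) hothers
  rw [Finset.card_erase_of_mem (Finset.mem_univ a), Finset.card_univ, Fintype.card_fin] at this
  omega

theorem exists_z_mem_of_isCliqueModel (hf : IsCliqueModel (graph ι) f)
    (hκ : 5 ≤ Fintype.card κ) : ∃ j, z ∈ f j := by
  by_contra! hz
  obtain ⟨a₀, ha₀⟩ : ∃ a₀, ∀ t, y t ∉ f a₀ := by
    by_contra! hy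
    have := card_le_of_pairwise_disjoint hf.pairwise_disjoint y (s := Finset.univ)
      fun j _ => hy j
    simp only [Finset.card_univ, Fintype.card_fin] at this
    omega
  obtain ⟨c, hcopy⟩ := exists_copy_of_isCliqueModel hf hz ha₀
  have hne : ∀ j, (hubs c (f j)).Nonempty := by
    intro j
    by_cases hj : ∀ t, y t ∉ f j
    · obtain ⟨i, hi⟩ := exists_x_mem_of_isCliqueModel hf hκ (hcopy j hj)
      exact ⟨(i, false), mem_hubs.mpr hi⟩
    · obtain ⟨t, ht⟩ := not_forall_not.mp hj
      exact ⟨(t, true), mem_hubs.mpr ht⟩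
  have hdisj : Pairwise (Disjoint on fun j => hubs c (f j)) := fun j j' hjj' =>
    Finset.disjoint_left.mpr fun p hp hp' =>
      Set.disjoint_left.mp (hf.pairwise_disjoint hjj') (mem_hubs.mp hp) (mem_hubs.mp hp')
  obtain ⟨i, a, b, ha, hb⟩ := exists_eq_singleton_pair hne hdisj
    (by rw [Fintype.card_fin]; omega)
  have hab : a ≠ b := by
    rintro rfl
    simp [ha] at hb
  obtain ⟨u, hu, v, hv, huv⟩ := hf.exists_adj a b hab
  exact not_adj_of_hubs_eq (hf.connected a) (hf.connected b) (hz a) (hz b) ha hb hu hv huv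

theorem not_hasCliqueMinor_six : ¬ HasCliqueMinor (graph ι) 6 := fun h => by
  obtain ⟨f, hf⟩ := hasCliqueMinor_iff.mp h
  obtain ⟨g, hg, hz⟩ := hf.exists_forall_notMem z
  obtain ⟨j, hj⟩ := exists_z_mem_of_isCliqueModel hg (by simp)
  exact hz j hj

def xVertices (ι : Type*) : Set (Vertex ι) := Set.range fun p : ι × Fin 3 => x p.1 p.2

theorem isBipartitionWith_xVertices :
    IsBipartitionWith (graph ι) (xVertices ι) (xVertices ι)ᶜ := by
  refine ⟨fun v => em _, fun v h => h.2 h.1, fun u v huv => ?_⟩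
  cases u <;> cases v <;> simp_all [graph, Rel, xVertices]

theorem ncard_xVertices [Finite ι] : (xVertices ι).ncard = 3 * Nat.card ι := by
  rw [xVertices, Set.ncard_range_of_injective fun _ _ h => Prod.ext (x.inj h).1 (x.inj h).2,
    Nat.card_prod, Nat.card_fin, mul_comm]

theorem ncard_compl_xVertices_le [Finite ι] : (xVertices ι)ᶜ.ncard ≤ 2 * Nat.card ι + 4 := by
  let W := Set.range fun p : ι × Fin 2 => w p.1 p.2
  have hsub : (xVertices ι)ᶜ ⊆ (Set.range y ∪ W) ∪ {z} := by
    intro v hv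
    cases v <;> simp_all [xVertices, W]
  have hW : W.ncard = 2 * Nat.card ι := by
    rw [Set.ncard_range_of_injective fun _ _ h => Prod.ext (w.inj h).1 (w.inj h).2,
      Nat.card_prod, Nat.card_fin, mul_comm]
  have hY : (Set.range (y (ι := ι))).ncard = 3 := by
    rw [Set.ncard_range_of_injective fun _ _ h => y.inj h, Nat.card_fin]
  calc (xVertices ι)ᶜ.ncard
      ≤ (Set.range y ∪ W).ncard + ({z} : Set (Vertex ι)).ncard :=
        (Set.ncard_le_ncard hsub).trans (Set.ncard_union_le _ _)
    _ ≤ 2 * Nat.card ι + 4 := by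
        grw [Set.ncard_union_le, hW, hY, Set.ncard_singleton]
        omega

theorem neighborSet_x [DecidableEq ι] (c : ι) (i : Fin 3) :
    (graph ι).neighborSet (x c i) =
      ↑({y (i + 1), y (i + 2), w c 0, w c 1, z} : Finset (Vertex ι)) := by
  ext v
  cases v with
  | y t => simp [graph, Rel, eq_comm]; fin_cases i <;> fin_cases t <;> decide
  | w c' s => simp [graph, Rel, eq_comm]; fin_cases s <;> simp
  | _ => simp [graph, Rel, eq_comm]

theorem ncard_neighborSet_x [DecidableEq ι] (c : ι) (i : Fin 3) :
    ((graph ι).neighborSet (x c i)).ncard = 5 := by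
  rw [neighborSet_x, Set.ncard_coe_finset]
  fin_cases i <;> simp

end GluedGraph

/-- There is a bipartite graph `G` with bipartition `(A,B)`, `|A| ≥ |B| > 0`,
in which every vertex of `A` has degree at least five, with no `K_6` minor;
so "six" cannot be replaced by "five" in the main theorem. -/
theorem exists_bipartite_minDegFive_noK6Minor :
    ∃ (n : ℕ) (G : SimpleGraph (Fin n)) (A B : Set (Fin n)),
      IsBipartitionWith G A B ∧ B.ncard ≤ A.ncard ∧ B.Nonempty ∧
        (∀ a ∈ A, 5 ≤ (G.neighborSet a).ncard) ∧ ¬ HasCliqueMinor G 6 := by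
  let G := GluedGraph.graph (Fin 4)
  let e := (Fintype.equivFin (GluedGraph.Vertex (Fin 4))).symm
  let φ : G.comap e ≃g G := Iso.comap e G
  have hncard (S : Set (GluedGraph.Vertex (Fin 4))) : (φ ⁻¹' S).ncard = S.ncard :=
    Set.ncard_preimage_of_injective_subset_range φ.injective (by simp [φ.surjective.range_eq])
  refine ⟨_, G.comap e, φ ⁻¹' GluedGraph.xVertices _, φ ⁻¹' (GluedGraph.xVertices _)ᶜ,
    GluedGraph.isBipartitionWith_xVertices.comap φ.toHom, ?_,
    ⟨φ.symm .z, by simp [GluedGraph.xVertices]⟩, ?_,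
    fun h => GluedGraph.not_hasCliqueMinor_six (h.map φ.toHom φ.injective)⟩
  · have := GluedGraph.ncard_compl_xVertices_le (ι := Fin 4)
    rw [Nat.card_fin] at this
    rw [hncard, hncard, GluedGraph.ncard_xVertices, Nat.card_fin]
    omega
  · rintro v ⟨⟨c, i⟩, hv⟩
    rw [← Nat.card_coe_set_eq, Nat.card_congr (φ.mapNeighborSet v), Nat.card_coe_set_eq, ← hv]
    exact (GluedGraph.ncard_neighborSet_x c i).ge
end

section
/- Let G be a minimal candidate with bipartition (A,B). If X ⊆ B is nonempty, then G\X has at most |X| connected components; likewise if X ⊆ A is nonempty, then G\X has at most |X| connected components. -/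
open SimpleGraph Function

private noncomputable def induceInduceIso {V : Type*} (G : SimpleGraph V) (S : Set V) (T : Set ↥S) :
    (G.induce S).induce T ≃g G.induce (Subtype.val '' T) where
  toEquiv := Equiv.Set.image Subtype.val T Subtype.val_injective
  map_rel_iff' := by
    rintro ⟨⟨a, ha⟩, ha'⟩ ⟨⟨b, hb⟩, hb'⟩
    simp [Equiv.Set.image, Equiv.Set.imageOfInjOn]

private noncomputable def induceIsoOfIso {V W : Type*} {G : SimpleGraph V} {G' : SimpleGraph W}
    (e : G ≃g G') (s : Set V) : G.induce s ≃g G'.induce (⇑e '' s) where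
  toEquiv := e.toEquiv.image s
  map_rel_iff' := by
    rintro ⟨a, ha⟩ ⟨b, hb⟩
    simp only [Equiv.image, Equiv.Set.imageOfInjOn, comap_adj, Embedding.coe_subtype]
    exact e.map_adj_iff

private theorem hasCliqueMinor_of_iso {V W : Type*} {G : SimpleGraph V} {G' : SimpleGraph W}
    (e : G ≃g G') {t : ℕ} (h : HasCliqueMinor G t) : HasCliqueMinor G' t := by
  obtain ⟨f, h1, h2, h3, h4⟩ := h
  refine ⟨fun i => ⇑e '' f i, fun i => (h1 i).image _, fun i => ?_, fun i j hij => ?_,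
    fun i j hij => ?_⟩
  · exact (induceIsoOfIso e (f i)).connected_iff.mp (h2 i)
  · exact (Set.disjoint_image_iff e.injective).mpr (h3 hij)
  · obtain ⟨u, hu, v, hv, huv⟩ := h4 i j hij
    exact ⟨e u, ⟨u, hu, rfl⟩, e v, ⟨v, hv, rfl⟩, e.map_adj_iff.mpr huv⟩

private theorem hasCliqueMinor_of_induce {V : Type*} {G : SimpleGraph V} {S : Set V} {t : ℕ}
    (h : HasCliqueMinor (G.induce S) t) : HasCliqueMinor G t := by
  obtain ⟨f, h1, h2, h3, h4⟩ := h
  refine ⟨fun i => Subtype.val '' f i, fun i => (h1 i).image _, fun i => ?_, fun i j hij => ?_,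
    fun i j hij => ?_⟩
  · exact (induceInduceIso G S (f i)).connected_iff.mp (h2 i)
  · exact (Set.disjoint_image_iff Subtype.val_injective).mpr (h3 hij)
  · obtain ⟨u, hu, v, hv, huv⟩ := h4 i j hij
    exact ⟨u, ⟨u, hu, rfl⟩, v, ⟨v, hv, rfl⟩, huv⟩

private theorem isCandidate_of_iso {V W : Type*} {G : SimpleGraph V} {G' : SimpleGraph W}
    (e : G ≃g G') {A B : Set V} (h : IsCandidate G A B) :
    IsCandidate G' (⇑e '' A) (⇑e '' B) := by
  obtain ⟨⟨hb1, hb2, hb3⟩, hcard, hBne, hdeg, hmin⟩ := h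
  have hmem : ∀ (s : Set V) (v : W), v ∈ ⇑e '' s ↔ e.symm v ∈ s := by
    intro s v
    constructor
    · rintro ⟨u, hu, rfl⟩; simpa using hu
    · intro hv; exact ⟨e.symm v, hv, by simp⟩
  refine ⟨⟨fun v => ?_, fun v => ?_, fun u v huv => ?_, ⟩, ?_, hBne.image _, ?_, ?_⟩
  · rw [hmem, hmem]; exact hb1 _
  · rw [hmem, hmem]; exact hb2 _
  · rw [hmem, hmem]
    refine hb3 ?_
    have := e.symm.map_adj_iff.mpr huv
    simpa using this
  · rw [Set.ncard_image_of_injective _ e.injective, Set.ncard_image_of_injective _ e.injective]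
    exact hcard
  · rintro a' ha'
    obtain ⟨a, ha, rfl⟩ := ha'
    have : Nat.card (G'.neighborSet (e a)) = Nat.card (G.neighborSet a) :=
      Nat.card_congr (e.mapNeighborSet a).symm
    rw [← Nat.card_coe_set_eq, this, Nat.card_coe_set_eq]
    exact hdeg a ha
  · intro hK; exact hmin (hasCliqueMinor_of_iso e.symm hK)

private theorem isCandidate_induce {V : Type*} {G : SimpleGraph V} {A B : Set V}
    (h : IsCandidate G A B) (S : Set V)
    (hnbr : ∀ a ∈ A, a ∈ S → G.neighborSet a ⊆ S)
    (hcard : (B ∩ S).ncard ≤ (A ∩ S).ncard) (hBne : (B ∩ S).Nonempty) :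
    IsCandidate (G.induce S) (Subtype.val ⁻¹' A) (Subtype.val ⁻¹' B) := by
  obtain ⟨⟨hb1, hb2, hb3⟩, _, _, hdeg, hmin⟩ := h
  have hpre : ∀ s : Set V, (Subtype.val ⁻¹' s : Set ↥S).ncard = (s ∩ S).ncard := by
    intro s
    rw [← Set.ncard_image_of_injective _ (Subtype.val_injective (p := (· ∈ S))),
      Subtype.image_preimage_coe, Set.inter_comm]
  refine ⟨⟨fun v => hb1 _, fun v => hb2 _, fun u v huv => hb3 huv⟩, ?_, ?_, ?_, ?_⟩
  · rw [hpre, hpre]; exact hcard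
  · obtain ⟨b, hbB, hbS⟩ := hBne; exact ⟨⟨b, hbS⟩, hbB⟩
  · rintro ⟨a, haS⟩ haA
    have hsub : G.neighborSet a ⊆ S := hnbr a haA haS
    have himg : Subtype.val '' ((G.induce S).neighborSet ⟨a, haS⟩) = G.neighborSet a := by
      ext w
      constructor
      · rintro ⟨⟨w', hw'⟩, hadj, rfl⟩; exact hadj
      · intro hw; exact ⟨⟨w, hsub hw⟩, hw, rfl⟩
    have := Set.ncard_image_of_injective ((G.induce S).neighborSet ⟨a, haS⟩)
      (Subtype.val_injective (p := (· ∈ S)))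
    rw [himg] at this
    rw [← this]
    exact hdeg a haA
  · intro hK; exact hmin (hasCliqueMinor_of_induce hK)

private theorem no_smaller_candidate {V : Type} [Fintype V] {G : SimpleGraph V} {A B : Set V}
    (hmin : IsMinimalCandidate G A B) (S : Set V)
    (hcand : IsCandidate (G.induce S) (Subtype.val ⁻¹' A) (Subtype.val ⁻¹' B))
    (hS : S ≠ Set.univ) : False := by
  classical
  haveI : Fintype ↥S := Fintype.ofFinite _
  set n := Fintype.card ↥S with hn
  set e : ↥S ≃ Fin n := Fintype.equivFin ↥S
  have iso : (G.induce S).comap ⇑e.symm.toEmbedding ≃g G.induce S := Iso.comap e.symm (G.induce S)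
  have hc' := isCandidate_of_iso iso.symm hcand
  have hle := hmin.2 n _ _ _ hc'
  -- edge counts
  have he1 : ((G.induce S).comap ⇑e.symm.toEmbedding).edgeSet.ncard = (G.induce S).edgeSet.ncard := by
    rw [← Nat.card_coe_set_eq, ← Nat.card_coe_set_eq]
    exact Nat.card_congr iso.mapEdgeSet
  have he2 : (G.induce S).edgeSet.ncard ≤ G.edgeSet.ncard := by
    rw [← Nat.card_coe_set_eq, ← Nat.card_coe_set_eq]
    exact Nat.card_le_card_of_injective _ (Embedding.induce (G := G) S).mapEdgeSet.injective
  have hnV : n < Fintype.card V := by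
    have : S ⊂ Set.univ := Ne.ssubset_of_subset hS (Set.subset_univ S)
    have h1 : S.ncard < (Set.univ : Set V).ncard := Set.ncard_lt_ncard this (Set.finite_univ)
    have h2 : S.ncard = n := by rw [← Nat.card_coe_set_eq, Nat.card_eq_fintype_card]
    have h3 : (Set.univ : Set V).ncard = Fintype.card V := by
      rw [Set.ncard_univ, Nat.card_eq_fintype_card]
    omega
  rw [he1] at hle
  omega

private theorem sum_ncard_fiber {V : Type} [Fintype V] {β : Type} [Fintype β]
    (g : V → β) (T : Set V) : ∑ c : β, {v | v ∈ T ∧ g v = c}.ncard = T.ncard := by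
  classical
  rw [Set.ncard_eq_toFinset_card' T,
    Finset.card_eq_sum_card_fiberwise (f := g) (t := Finset.univ) (fun x _ => Finset.mem_univ _)]
  refine Finset.sum_congr rfl fun c _ => ?_
  rw [Set.ncard_eq_toFinset_card']
  congr 1
  ext v
  simp

/-- In a minimal candidate, deleting a nonempty set `X` of vertices contained in one
of the parts leaves at most `|X|` connected components. -/
theorem minimalCandidate_components_le {V : Type} [Fintype V] (G : SimpleGraph V)
    (A B : Set V) (hmin : IsMinimalCandidate G A B) (X : Set V) (hne : X.Nonempty)
    (hX : X ⊆ A ∨ X ⊆ B) :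
    Nat.card (G.induce Xᶜ).ConnectedComponent ≤ X.ncard := by
  classical
  by_contra hcon
  push_neg at hcon
  set H := G.induce Xᶜ with hH
  obtain ⟨⟨hb1, hb2, hb3⟩, hcardAB, hBne0, hdeg, hK⟩ := hmin.1
  have hCCne : Nonempty H.ConnectedComponent :=
    (Nat.card_pos_iff.mp (lt_of_le_of_lt (Nat.zero_le _) hcon)).1
  haveI : Fintype H.ConnectedComponent := Fintype.ofFinite _
  have hk : X.ncard < Fintype.card H.ConnectedComponent := by
    rwa [Nat.card_eq_fintype_card] at hcon
  set κ' : V → H.ConnectedComponent :=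
    fun v => if h : v ∈ Xᶜ then H.connectedComponentMk ⟨v, h⟩ else hCCne.some with hκ'
  -- adjacency within Xᶜ preserves the component
  have hadj : ∀ u w, G.Adj u w → u ∈ Xᶜ → w ∈ Xᶜ → κ' u = κ' w := by
    intro u w huw hu hw
    simp only [hκ', dif_pos hu, dif_pos hw]
    exact ConnectedComponent.connectedComponentMk_eq_of_adj (by exact huw)
  -- representatives
  have hrep : ∀ c : H.ConnectedComponent, ∃ v : V, ∃ h : v ∈ Xᶜ, κ' v = c := by
    intro c
    obtain ⟨v, hv⟩ := c.exists_rep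
    exact ⟨↑v, v.2, by simp only [hκ', dif_pos v.2, Subtype.coe_eta]; exact hv⟩
  -- fiber counts
  set a : H.ConnectedComponent → ℕ := fun c => {v | v ∈ A ∩ Xᶜ ∧ κ' v = c}.ncard with ha
  set b : H.ConnectedComponent → ℕ := fun c => {v | v ∈ B ∩ Xᶜ ∧ κ' v = c}.ncard with hb
  have hsumA : ∑ c, a c = (A ∩ Xᶜ).ncard := sum_ncard_fiber κ' (A ∩ Xᶜ)
  have hsumB : ∑ c, b c = (B ∩ Xᶜ).ncard := sum_ncard_fiber κ' (B ∩ Xᶜ)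
  have haA : ∀ c, a c ≤ (A ∩ Xᶜ).ncard :=
    fun c => Set.ncard_le_ncard (fun v hv => hv.1) (Set.toFinite _)
  have hbB : ∀ c, b c ≤ (B ∩ Xᶜ).ncard :=
    fun c => Set.ncard_le_ncard (fun v hv => hv.1) (Set.toFinite _)
  rcases hX with hXA | hXB
  · -- X ⊆ A
    have hAX : A ∩ Xᶜ = A \ X := by rw [Set.diff_eq]
    have hBX : B ∩ Xᶜ = B := by
      ext v; constructor
      · exact fun hv => hv.1
      · exact fun hv => ⟨hv, fun hvX => hb2 v ⟨hXA hvX, hv⟩⟩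
    have hAXcard : (A ∩ Xᶜ).ncard + X.ncard = A.ncard := by
      rw [hAX, Set.ncard_diff hXA (Set.toFinite _)]
      have := Set.ncard_le_ncard hXA (Set.toFinite A)
      omega
    -- find a component with b c ≤ a c
    have hex : ∃ c, b c ≤ a c := by
      by_contra hall
      push_neg at hall
      have hsum : ∑ c, (a c + 1) ≤ ∑ c, b c :=
        Finset.sum_le_sum fun c _ => hall c
      rw [Finset.sum_add_distrib, Finset.sum_const, Finset.card_univ, smul_eq_mul, mul_one,
        hsumA, hsumB, hBX] at hsum
      omega
    obtain ⟨c, hc⟩ := hex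
    set S : Set V := {v | v ∈ Xᶜ ∧ κ' v = c} with hS
    have hAS : A ∩ S = {v | v ∈ A ∩ Xᶜ ∧ κ' v = c} := by
      ext v; simp only [hS, Set.mem_inter_iff, Set.mem_setOf_eq]; tauto
    have hBS : B ∩ S = {v | v ∈ B ∩ Xᶜ ∧ κ' v = c} := by
      ext v; simp only [hS, Set.mem_inter_iff, Set.mem_setOf_eq]; tauto
    have hnbr : ∀ v ∈ A, v ∈ S → G.neighborSet v ⊆ S := by
      intro v hvA hvS w hw
      have hwB : w ∈ B := (hb3 hw).mp hvA
      have hwX : w ∈ Xᶜ := fun hwX => hb2 w ⟨hXA hwX, hwB⟩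
      exact ⟨hwX, (hadj v w hw hvS.1 hwX).symm.trans hvS.2⟩
    have hBSne : (B ∩ S).Nonempty := by
      obtain ⟨v, hvX, hvc⟩ := hrep c
      rcases hb1 v with hvA | hvB
      · have hnb : (G.neighborSet v).Nonempty := by
          have := hdeg v hvA
          exact Set.nonempty_of_ncard_ne_zero (by omega)
        obtain ⟨w, hw⟩ := hnb
        have hwB : w ∈ B := (hb3 hw).mp hvA
        have hwX : w ∈ Xᶜ := fun hwX => hb2 w ⟨hXA hwX, hwB⟩
        exact ⟨w, hwB, hwX, (hadj v w hw hvX hwX).symm.trans hvc⟩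
      · exact ⟨v, hvB, hvX, hvc⟩
    have hcard : (B ∩ S).ncard ≤ (A ∩ S).ncard := by
      rw [hAS, hBS]; exact hc
    have hSne : S ≠ Set.univ := by
      intro h
      obtain ⟨x, hx⟩ := hne
      have : x ∈ S := h ▸ Set.mem_univ x
      exact this.1 hx
    exact no_smaller_candidate hmin S
      (isCandidate_induce ⟨⟨hb1, hb2, hb3⟩, hcardAB, hBne0, hdeg, hK⟩ S hnbr hcard hBSne) hSne
  · -- X ⊆ B
    have hAX : A ∩ Xᶜ = A := by
      ext v; constructor
      · exact fun hv => hv.1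
      · exact fun hv => ⟨hv, fun hvX => hb2 v ⟨hv, hXB hvX⟩⟩
    have hBX : B ∩ Xᶜ = B \ X := by rw [Set.diff_eq]
    have hXB' : X.ncard ≤ B.ncard := Set.ncard_le_ncard hXB (Set.toFinite B)
    have hBXcard : (B ∩ Xᶜ).ncard + X.ncard = B.ncard := by
      rw [hBX, Set.ncard_diff hXB (Set.toFinite _)]
      omega
    -- find a component with (a c : ℤ) - b c ≤ A.ncard - B.ncard
    have hex : ∃ c, (a c : ℤ) - b c ≤ (A.ncard : ℤ) - B.ncard := by
      by_contra hall
      push_neg at hall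
      have hsum : ∑ _c : H.ConnectedComponent, ((A.ncard : ℤ) - B.ncard + 1) ≤
          ∑ c, ((a c : ℤ) - b c) :=
        Finset.sum_le_sum fun c _ => by have := hall c; omega
      rw [Finset.sum_const, Finset.card_univ, Finset.sum_sub_distrib, ← Nat.cast_sum,
        ← Nat.cast_sum, hsumA, hsumB, nsmul_eq_mul] at hsum
      have h1 : ((A ∩ Xᶜ).ncard : ℤ) = A.ncard := by rw [hAX]
      have h2 : ((B ∩ Xᶜ).ncard : ℤ) = (B.ncard : ℤ) - X.ncard := by
        have := hBXcard; omega
      rw [h1, h2] at hsum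
      set k : ℤ := (Fintype.card H.ConnectedComponent : ℤ) with hkZ
      have hk' : (X.ncard : ℤ) + 1 ≤ k := by
        have := hk; omega
      have hD : (0 : ℤ) ≤ (A.ncard : ℤ) - B.ncard := by
        have := hcardAB; omega
      nlinarith [hsum, hk', hD]
    obtain ⟨c, hc⟩ := hex
    set S : Set V := X ∪ {v | v ∈ Xᶜ ∧ κ' v ≠ c} with hS
    have hAS : A ∩ S = {v | v ∈ A ∩ Xᶜ ∧ κ' v ≠ c} := by
      ext v
      simp only [hS, Set.mem_inter_iff, Set.mem_union, Set.mem_setOf_eq]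
      constructor
      · rintro ⟨hvA, hvX | ⟨hvX, hvc⟩⟩
        · exact absurd ⟨hvA, hXB hvX⟩ (hb2 v)
        · exact ⟨⟨hvA, hvX⟩, hvc⟩
      · rintro ⟨⟨hvA, hvX⟩, hvc⟩; exact ⟨hvA, Or.inr ⟨hvX, hvc⟩⟩
    have hBS : B ∩ S = X ∪ {v | v ∈ B ∩ Xᶜ ∧ κ' v ≠ c} := by
      ext v
      simp only [hS, Set.mem_inter_iff, Set.mem_union, Set.mem_setOf_eq]
      constructor
      · rintro ⟨hvB, hvX | ⟨hvX, hvc⟩⟩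
        · exact Or.inl hvX
        · exact Or.inr ⟨⟨hvB, hvX⟩, hvc⟩
      · rintro (hvX | ⟨⟨hvB, hvX⟩, hvc⟩)
        · exact ⟨hXB hvX, Or.inl hvX⟩
        · exact ⟨hvB, Or.inr ⟨hvX, hvc⟩⟩
    -- ncard computations for the "≠ c" fibers
    have hfibA : {v | v ∈ A ∩ Xᶜ ∧ κ' v ≠ c}.ncard + a c = (A ∩ Xᶜ).ncard := by
      have hdiff : {v | v ∈ A ∩ Xᶜ ∧ κ' v ≠ c} = (A ∩ Xᶜ) \ {v | v ∈ A ∩ Xᶜ ∧ κ' v = c} := by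
        ext v; simp only [Set.mem_setOf_eq, Set.mem_diff, Set.mem_inter_iff]; tauto
      rw [hdiff, Set.ncard_diff (fun v hv => hv.1) (Set.toFinite _)]
      have hac : {v | v ∈ A ∩ Xᶜ ∧ κ' v = c}.ncard = a c := rfl
      have := haA c
      omega
    have hfibB : {v | v ∈ B ∩ Xᶜ ∧ κ' v ≠ c}.ncard + b c = (B ∩ Xᶜ).ncard := by
      have hdiff : {v | v ∈ B ∩ Xᶜ ∧ κ' v ≠ c} = (B ∩ Xᶜ) \ {v | v ∈ B ∩ Xᶜ ∧ κ' v = c} := by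
        ext v; simp only [Set.mem_setOf_eq, Set.mem_diff, Set.mem_inter_iff]; tauto
      rw [hdiff, Set.ncard_diff (fun v hv => hv.1) (Set.toFinite _)]
      have hbc : {v | v ∈ B ∩ Xᶜ ∧ κ' v = c}.ncard = b c := rfl
      have := hbB c
      omega
    have hBScard : (B ∩ S).ncard = X.ncard + {v | v ∈ B ∩ Xᶜ ∧ κ' v ≠ c}.ncard := by
      rw [hBS, Set.ncard_union_eq ?_ (Set.toFinite _) (Set.toFinite _)]
      exact Set.disjoint_left.mpr fun v hvX hv => hv.1.2 hvX
    have hcard : (B ∩ S).ncard ≤ (A ∩ S).ncard := by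
      rw [hBScard, hAS]
      have hA' : (A ∩ Xᶜ).ncard = A.ncard := by rw [hAX]
      omega
    have hnbr : ∀ v ∈ A, v ∈ S → G.neighborSet v ⊆ S := by
      intro v hvA hvS w hw
      have hvX : v ∉ X := fun hvX => hb2 v ⟨hvA, hXB hvX⟩
      have hvc : κ' v ≠ c := by
        rcases hvS with hvS | hvS
        · exact absurd hvS hvX
        · exact hvS.2
      have hwB : w ∈ B := (hb3 hw).mp hvA
      by_cases hwX : w ∈ X
      · exact Or.inl hwX
      · exact Or.inr ⟨hwX, fun hwc => hvc ((hadj v w hw hvX hwX).trans hwc)⟩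
    have hBSne : (B ∩ S).Nonempty := by
      obtain ⟨x, hx⟩ := hne
      exact ⟨x, hXB hx, Or.inl hx⟩
    have hSne : S ≠ Set.univ := by
      intro h
      obtain ⟨v, hvX, hvc⟩ := hrep c
      have : v ∈ S := h ▸ Set.mem_univ v
      rcases this with hv | hv
      · exact hvX hv
      · exact hv.2 hvc
    exact no_smaller_candidate hmin S
      (isCandidate_induce ⟨⟨hb1, hb2, hb3⟩, hcardAB, hBne0, hdeg, hK⟩ S hnbr hcard hBSne) hSne
end
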